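/- arXiv:2010.11605 — 5 statements merged into one kernel-verified Lean document; each statement's English description precedes it below -/
import Mathlib

section
/- NAPA are not closed under intersection: there exist a finite alphabet Σ and two NAPA A₁, A₂ over Σ with two directions such that no NAPA over Σ with two directions recognizes L(A₁) ∩ L(A₂). -/
/-! ### Positive Boolean formulas -/

/-- Positive Boolean formulas over a set of atoms `Q`, built from atoms,
conjunction, disjunction and the constants true and false. -/
inductive PosBool (Q : Type u) : Type u
  | tt : PosBool Q
  | ff : PosBool Q
  | var : Q → PosBool Q
  | and : PosBool Q → PosBool Q → PosBool Q
  | or : PosBool Q → PosBool Q → PosBool Q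

namespace PosBool

/-- `Sat C f` holds iff the valuation making exactly the elements of `C` true satisfies `f`. -/
def Sat {Q : Type u} (C : Set Q) : PosBool Q → Prop
  | tt => True
  | ff => False
  | var q => q ∈ C
  | and f g => Sat C f ∧ Sat C g
  | or f g => Sat C f ∨ Sat C g

/-- A positive Boolean formula that is a disjunction of atoms. -/
inductive IsDisj {Q : Type u} : PosBool Q → Prop
  | ff : IsDisj ff
  | var (q : Q) : IsDisj (var q)
  | or {f g : PosBool Q} : IsDisj f → IsDisj g → IsDisj (f.or g)

/-- Syntactic size of a positive Boolean formula. -/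
def size {Q : Type u} : PosBool Q → ℕ
  | tt => 1
  | ff => 1
  | var _ => 1
  | and f g => size f + size g + 1
  | or f g => size f + size g + 1

end PosBool

/-! ### Alternating Asynchronous Parity Automata -/

/-- An Alternating Asynchronous Parity Automaton (AAPA) over the alphabet `σ`
with state set `Q` and `n` directions. -/
structure AAPA (σ : Type u) (Q : Type v) (n : ℕ) where
  init : PosBool Q
  trans : Q → σ → Fin n → PosBool Q
  prio : Q → ℕ

namespace AAPA

variable {σ : Type u} {Q : Type v} {n : ℕ}

/-- A run of an AAPA `A` on the tuple of `ω`-words `w`: a tree of nodes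
(coded as lists of natural numbers, the root being `[]`), whose non-root nodes
are labeled with states and which carry offset counters, subject to the
local consistency conditions of AAPA runs. -/
structure Run (A : AAPA σ Q n) (w : Fin n → ℕ → σ) where
  tree : Set (List ℕ)
  label : List ℕ → Q
  cnt : List ℕ → Fin n → ℕ
  root_mem : [] ∈ tree
  prefix_closed : ∀ (t : List ℕ) (m : ℕ), t ++ [m] ∈ tree → t ∈ tree
  has_child : ∀ t ∈ tree, ∃ m : ℕ, t ++ [m] ∈ tree
  cnt_init : ∀ t ∈ tree, t.length ≤ 1 → cnt t = 0
  init_sat : PosBool.Sat {q | ∃ m : ℕ, [m] ∈ tree ∧ label [m] = q} A.init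
  step : ∀ t ∈ tree, t ≠ [] → ∃ d : Fin n,
    (∀ m : ℕ, t ++ [m] ∈ tree →
      cnt (t ++ [m]) = Function.update (cnt t) d (cnt t d + 1)) ∧
    PosBool.Sat {q | ∃ m : ℕ, t ++ [m] ∈ tree ∧ label (t ++ [m]) = q}
      (A.trans (label t) (w d (cnt t d)) d)

variable {A : AAPA σ Q n} {w : Fin n → ℕ → σ}

/-- An infinite path through a run, starting at the root. -/
def Run.IsPath (r : A.Run w) (p : ℕ → List ℕ) : Prop :=
  p 0 = [] ∧ ∀ i : ℕ, (∃ m : ℕ, p (i + 1) = p i ++ [m]) ∧ p (i + 1) ∈ r.tree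

/-- A run is accepting iff on every infinite path the least priority occurring
infinitely often is even. -/
def Run.Accepting (r : A.Run w) : Prop :=
  ∀ p : ℕ → List ℕ, r.IsPath p →
    Even (sInf {c : ℕ | ∀ N : ℕ, ∃ i : ℕ, N ≤ i ∧ A.prio (r.label (p i)) = c})

/-- The language of an AAPA: the set of tuples of `ω`-words on which it has an
accepting run. -/
def lang (A : AAPA σ Q n) : Set (Fin n → ℕ → σ) :=
  {w | ∃ r : A.Run w, r.Accepting}

/-- A Nondeterministic Asynchronous Parity Automaton (NAPA) is an AAPA whose
initial condition and transitions are disjunctions of states. -/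
def IsNondet (A : AAPA σ Q n) : Prop :=
  A.init.IsDisj ∧ ∀ (q : Q) (a : σ) (d : Fin n), (A.trans q a d).IsDisj

end AAPA

/-!
A run of a NAPA can be pruned to a single path: a sequence of configurations, each step reading
the next letter of one of the two words. The intersection of the languages of `blockAut .cmp` and
`blockAut .skip` contains, for every `p`, a pair whose first word is `aᵖ b aᵖ b^ω`, and the first
word of each of its pairs begins with `aᵏ b aᵏ b` for some `k`. A NAPA `B` with the same language
must, on each of these pairs, read all of the leading `aᵖ`: otherwise it would also accept the
pair with first word `a^ω`. As `B` has finitely many states, for some `n ≠ m` the runs on the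
`n`-th and on the `m`-th pair are in the same state when they have read exactly `aⁿ`, resp. `aᵐ`.
Following the first run up to that moment and the second one afterwards gives an accepting run
on a pair with first word `aⁿ b aᵐ b^ω`, which is not in the intersection.
-/

open Filter Relation

namespace PosBool

variable {Q : Type*}

theorem Sat.mono {C C' : Set Q} (h : C ⊆ C') : ∀ {f : PosBool Q}, Sat C f → Sat C' f
  | tt, _ => trivial
  | var _, hq => h hq
  | and _ _, ⟨hf, hg⟩ => ⟨hf.mono h, hg.mono h⟩
  | or _ _, .inl hf => .inl (hf.mono h)
  | or _ _, .inr hg => .inr (hg.mono h)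

theorem IsDisj.exists_sat_singleton {f : PosBool Q} (hf : f.IsDisj) {C : Set Q} (hC : Sat C f) :
    ∃ q ∈ C, Sat {q} f := by
  induction hf with
  | ff => exact hC.elim
  | var q => exact ⟨q, hC, rfl⟩
  | or _ _ ihf ihg =>
    rcases hC with h | h
    · obtain ⟨q, hq, hs⟩ := ihf h
      exact ⟨q, hq, .inl hs⟩
    · obtain ⟨q, hq, hs⟩ := ihg h
      exact ⟨q, hq, .inr hs⟩

end PosBool

theorem reflTransGen_of_forall_lt {α : Type*} {r : α → α → Prop} {f : ℕ → α} {T : ℕ}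
    (h : ∀ i < T, r (f i) (f (i + 1))) : ReflTransGen r (f 0) (f T) :=
  ReflTransGen.lift f (fun _ _ hi => hi) _ _ <|
    reflTransGen_of_succ_of_le (fun i j => r (f i) (f j))
      (fun i hi => by simpa [Order.succ_eq_add_one] using h i hi.2) T.zero_le

/-- The word that reads `u` below position `k` and continues with `v` from position `l`. -/
def splice {α : Type*} (u v : ℕ → α) (k l : ℕ) (i : ℕ) : α :=
  if i < k then u i else v (i - k + l)

namespace AAPA

variable {σ Q : Type*} {n : ℕ} (A : AAPA σ Q n)

/-- A configuration is a state together with the reading position on each of the `n` words. -/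
def Step (w : Fin n → ℕ → σ) (x y : Q × (Fin n → ℕ)) : Prop :=
  ∃ d, y.2 = Function.update x.2 d (x.2 d + 1) ∧ PosBool.Sat {y.1} (A.trans x.1 (w d (x.2 d)) d)

def IsStepSeq (w : Fin n → ℕ → σ) (f : ℕ → Q × (Fin n → ℕ)) : Prop :=
  ∀ i, A.Step w (f i) (f (i + 1))

structure IsLinRun (w : Fin n → ℕ → σ) (f : ℕ → Q × (Fin n → ℕ)) : Prop where
  init : PosBool.Sat {(f 0).1} A.init
  cnt_zero : (f 0).2 = 0
  step : A.IsStepSeq w f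

def ParityAccepts (s : ℕ → Q) : Prop :=
  Even (sInf {c : ℕ | ∀ N : ℕ, ∃ i : ℕ, N ≤ i ∧ A.prio (s i) = c})

variable {A} {w w' : Fin n → ℕ → σ} {x y : Q × (Fin n → ℕ)}

theorem Step.snd_le (h : A.Step w x y) : x.2 ≤ y.2 := by
  obtain ⟨d, hy, -⟩ := h
  intro e
  rw [hy, Function.update_apply]
  split_ifs with he <;> simp [he]

theorem Step.snd_apply_le_add_one (h : A.Step w x y) (e : Fin n) : y.2 e ≤ x.2 e + 1 := by
  obtain ⟨d, hy, -⟩ := h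
  rw [hy, Function.update_apply]
  split_ifs with he <;> simp [he]

theorem Step.congr (h : A.Step w x y) (hw : ∀ e k, k < y.2 e → w e k = w' e k) :
    A.Step w' x y := by
  obtain ⟨d, hy, hsat⟩ := h
  refine ⟨d, hy, ?_⟩
  rwa [← hw d (x.2 d) (by simp [hy])]

theorem Step.translate (h : A.Step w x y) {D D' : Fin n → ℕ} (hD' : D' ≤ x.2)
    (hw : ∀ e j, w' e (j + D e) = w e (j + D' e)) :
    A.Step w' (x.1, x.2 - D' + D) (y.1, y.2 - D' + D) := by
  obtain ⟨d, hy, hsat⟩ := h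
  have hread : w' d (x.2 d - D' d + D d) = w d (x.2 d) := by
    rw [hw, Nat.sub_add_cancel (hD' d)]
  refine ⟨d, ?_, by simpa [hread] using hsat⟩
  funext e
  simp only [hy, Pi.add_apply, Pi.sub_apply, Function.update_apply]
  split_ifs with he
  · subst he
    rw [Nat.sub_add_comm (hD' e), Nat.add_right_comm]
  · rfl

theorem IsStepSeq.monotone {f : ℕ → Q × (Fin n → ℕ)} (hf : A.IsStepSeq w f) :
    Monotone fun i => (f i).2 :=
  monotone_nat_of_le_succ fun i => (hf i).snd_le

theorem exists_isStepSeq_of_reflTransGen {g : ℕ → Q × (Fin n → ℕ)}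
    (h : ReflTransGen (A.Step w) x (g 0)) (hg : A.IsStepSeq w g) :
    ∃ f k, f 0 = x ∧ A.IsStepSeq w f ∧ ∀ i, f (i + k) = g i := by
  induction h using ReflTransGen.head_induction_on with
  | refl => exact ⟨g, 0, rfl, hg, fun _ => rfl⟩
  | head hstep _ ih =>
    obtain ⟨f, k, hf0, hf, hfg⟩ := ih
    refine ⟨fun | 0 => _ | i + 1 => f i, k + 1, rfl, ?_, hfg⟩
    rintro (_ | i)
    · simpa [hf0] using hstep
    · exact hf i

theorem parityAccepts_comp_add (s : ℕ → Q) (k : ℕ) :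
    A.ParityAccepts (fun i => s (i + k)) ↔ A.ParityAccepts s := by
  have hfreq (c : ℕ) :
      (∃ᶠ i in atTop, A.prio (s (i + k)) = c) ↔ ∃ᶠ i in atTop, A.prio (s i) = c := by
    conv_rhs => rw [← map_add_atTop_eq_nat k]
    rw [frequently_map]
  simp only [ParityAccepts, ← frequently_atTop, hfreq]

theorem ParityAccepts.exists_even_prio [Finite Q] {s : ℕ → Q} (h : A.ParityAccepts s) :
    ∃ i, Even (A.prio (s i)) := by
  obtain ⟨q, hq⟩ := Finite.exists_infinite_fiber s
  have hfreq : ∃ᶠ i in atTop, s i = q :=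
    Nat.frequently_atTop_iff_infinite.2 (Set.infinite_coe_iff.1 hq)
  have hne : {c : ℕ | ∀ N : ℕ, ∃ i : ℕ, N ≤ i ∧ A.prio (s i) = c}.Nonempty :=
    ⟨A.prio q, fun N => (frequently_atTop.1 hfreq N).imp fun _ ⟨hi, hs⟩ => ⟨hi, by rw [hs]⟩⟩
  obtain ⟨i, -, hi⟩ := Nat.sInf_mem hne 0
  exact ⟨i, hi ▸ h⟩

theorem mem_lang_of_isLinRun {f : ℕ → Q × (Fin n → ℕ)} (hf : A.IsLinRun w f)
    (hacc : A.ParityAccepts fun i => (f i).1) : w ∈ A.lang := by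
  obtain ⟨hinit, hcnt, hstep⟩ := hf
  let r : A.Run w :=
    { tree := {t | ∀ m ∈ t, m = 0}
      label := fun t => (f (t.length - 1)).1
      cnt := fun t => (f (t.length - 1)).2
      root_mem := by simp
      prefix_closed := fun t m ht k hk => ht k (by simp [hk])
      has_child := fun t ht => ⟨0, by simpa [or_imp, forall_and] using ht⟩
      cnt_init := fun t _ ht => by simpa [show t.length - 1 = 0 by omega] using hcnt
      init_sat := hinit.mono (by rintro _ rfl; exact ⟨0, by simp, rfl⟩)
      step := by
        intro t ht hne
        obtain ⟨j, hj⟩ : ∃ j, t.length = j + 1 :=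
          Nat.exists_eq_add_one.2 (List.length_pos_iff.2 hne)
        obtain ⟨d, hd, hsat⟩ := hstep j
        refine ⟨d, fun m _ => by simpa [hj] using hd, ?_⟩
        simp only [hj, add_tsub_cancel_right]
        refine hsat.mono ?_
        rintro _ rfl
        exact ⟨0, by simpa [or_imp, forall_and] using ht, by simp [hj]⟩ }
  refine ⟨r, fun p ⟨hp0, hp⟩ => ?_⟩
  have hlen : ∀ i, (p i).length = i := by
    intro i
    induction i with
    | zero => simp [hp0]
    | succ i ih =>
      obtain ⟨⟨m, hm⟩, -⟩ := hp i
      simp [hm, ih]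
  change A.ParityAccepts fun i => r.label (p i)
  rw [← parityAccepts_comp_add _ 1]
  simpa [r, hlen] using hacc

theorem exists_isLinRun_of_mem_lang (hA : A.IsNondet) (hw : w ∈ A.lang) :
    ∃ f, A.IsLinRun w f ∧ A.ParityAccepts fun i => (f i).1 := by
  obtain ⟨r, hacc⟩ := hw
  have hchild : ∀ t, ∃ m : ℕ,
      (t = [] → [m] ∈ r.tree ∧ PosBool.Sat {r.label [m]} A.init) ∧
      (t ∈ r.tree → t ≠ [] → t ++ [m] ∈ r.tree ∧
        A.Step w (r.label t, r.cnt t) (r.label (t ++ [m]), r.cnt (t ++ [m]))) := by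
    intro t
    by_cases ht : t = []
    · obtain ⟨_, ⟨m, hm, rfl⟩, hsat⟩ := hA.1.exists_sat_singleton r.init_sat
      exact ⟨m, fun _ => ⟨hm, hsat⟩, fun _ h => (h ht).elim⟩
    by_cases htr : t ∈ r.tree
    · obtain ⟨d, hcnt, hsat⟩ := r.step t htr ht
      obtain ⟨_, ⟨m, hm, rfl⟩, hsat'⟩ := (hA.2 _ _ _).exists_sat_singleton hsat
      exact ⟨m, fun h => (ht h).elim, fun _ _ => ⟨hm, d, hcnt m hm, hsat'⟩⟩
    · exact ⟨0, fun h => (ht h).elim, fun h => (htr h).elim⟩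
  choose next hnext using hchild
  let p : ℕ → List ℕ := fun i => (fun t => t ++ [next t])^[i] []
  have hp_succ (i : ℕ) : p (i + 1) = p i ++ [next (p i)] :=
    Function.iterate_succ_apply' _ i []
  have hp_mem (i : ℕ) : p (i + 1) ∈ r.tree := by
    induction i with
    | zero => exact (hnext []).1 rfl |>.1
    | succ i ih => rw [hp_succ]; exact ((hnext _).2 ih (by simp [hp_succ])).1
  refine ⟨fun i => (r.label (p (i + 1)), r.cnt (p (i + 1))), ⟨?_, ?_, fun i => ?_⟩, ?_⟩
  · exact ((hnext []).1 rfl).2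
  · exact r.cnt_init _ (hp_mem 0) (by simp [p])
  · rw [hp_succ (i + 1)]
    exact ((hnext _).2 (hp_mem i) (by simp [hp_succ])).2
  · exact (parityAccepts_comp_add (fun i => r.label (p i)) 1).2
      (hacc p ⟨rfl, fun i => ⟨⟨_, hp_succ i⟩, hp_mem i⟩⟩)

theorem mem_lang_of_reflTransGen {q₀ : Q} {g : ℕ → Q × (Fin n → ℕ)}
    (hinit : PosBool.Sat {q₀} A.init) (hreach : ReflTransGen (A.Step w) (q₀, 0) (g 0))
    (hg : A.IsStepSeq w g) (hacc : A.ParityAccepts fun i => (g i).1) : w ∈ A.lang := by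
  obtain ⟨f, k, hf0, hf, hfg⟩ := exists_isStepSeq_of_reflTransGen hreach hg
  refine mem_lang_of_isLinRun ⟨by simpa [hf0] using hinit, by simp [hf0], hf⟩ ?_
  rw [← parityAccepts_comp_add _ k]
  simpa [hfg] using hacc

theorem IsLinRun.reflTransGen {f : ℕ → Q × (Fin n → ℕ)} (hf : A.IsLinRun w f) (i : ℕ) :
    ReflTransGen (A.Step w) ((f 0).1, 0) (f i) := by
  simpa [← hf.cnt_zero] using reflTransGen_of_forall_lt fun j _ => hf.step j

theorem exists_reflTransGen_even_prio [Finite Q] (hA : A.IsNondet) (hw : w ∈ A.lang) :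
    ∃ q₀ x, PosBool.Sat {q₀} A.init ∧ ReflTransGen (A.Step w) (q₀, 0) x ∧ Even (A.prio x.1) := by
  obtain ⟨f, hf, hacc⟩ := exists_isLinRun_of_mem_lang hA hw
  obtain ⟨i, hi⟩ := hacc.exists_even_prio
  exact ⟨_, f i, hf.init, hf.reflTransGen i, hi⟩

theorem parityAccepts_const (q : Q) : A.ParityAccepts (fun _ => q) ↔ Even (A.prio q) := by
  have hset : {c : ℕ | ∀ N : ℕ, ∃ i : ℕ, N ≤ i ∧ A.prio q = c} = {A.prio q} :=
    Set.ext fun _ => ⟨fun h => (h 0).choose_spec.2.symm, fun h N => ⟨N, le_rfl, h.symm⟩⟩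
  rw [ParityAccepts, hset, csInf_singleton]

theorem mem_lang_of_reflTransGen_sink {q₀ s : Q} {c : Fin n → ℕ} (d : Fin n)
    (hinit : PosBool.Sat {q₀} A.init) (hreach : ReflTransGen (A.Step w) (q₀, 0) (s, c))
    (hsink : ∀ a, PosBool.Sat {s} (A.trans s a d)) (heven : Even (A.prio s)) : w ∈ A.lang := by
  refine mem_lang_of_reflTransGen (g := fun i => (s, Function.update c d (c d + i))) hinit
    (by simpa using hreach) (fun i => ⟨d, by simp [add_assoc], by simpa using hsink _⟩)
    ((parityAccepts_const s).2 heven)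

theorem mem_lang_splice {f g : ℕ → Q × (Fin n → ℕ)} (hf : A.IsLinRun w f) (hg : A.IsLinRun w' g)
    (hacc : A.ParityAccepts fun i => (g i).1) {T T' : ℕ} (hT : (f T).1 = (g T').1) :
    (fun e => splice (w e) (w' e) ((f T).2 e) ((g T').2 e)) ∈ A.lang := by
  set y := fun e => splice (w e) (w' e) ((f T).2 e) ((g T').2 e)
  -- Up to time `T`, `f` reads `w` only below `(f T).2`; from time `T'` on, `g` reads `w'` only
  -- from `(g T').2` on.
  have hpre : ReflTransGen (A.Step y) ((f 0).1, 0) (f T) := by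
    simpa [← hf.cnt_zero] using reflTransGen_of_forall_lt fun i (hi : i < T) =>
      (hf.step i).congr fun e k hk => by
        simp [y, splice, hk.trans_le (hf.step.monotone hi e)]
  let h : ℕ → Q × (Fin n → ℕ) := fun i => ((g (i + T')).1, (g (i + T')).2 - (g T').2 + (f T).2)
  have hh : A.IsStepSeq y h := fun i => by
    simpa only [h, Nat.add_right_comm i 1 T'] using (hg.step (i + T')).translate (w' := y)
      (D := (f T).2) (hg.step.monotone (Nat.le_add_left T' i)) fun e j => by simp [y, splice]
  have hh0 : h 0 = f T := by ext <;> simp [h, hT]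
  refine mem_lang_of_reflTransGen hf.init (hh0 ▸ hpre) hh ?_
  exact (parityAccepts_comp_add (fun i => (g i).1) T').2 hacc

theorem IsLinRun.mem_lang_update_of_forall_ne {f : ℕ → Q × (Fin n → ℕ)} (hf : A.IsLinRun w f)
    (hacc : A.ParityAccepts fun i => (f i).1) {e : Fin n} {k : ℕ} (hk : ∀ i, (f i).2 e ≠ k)
    {u : ℕ → σ} (hu : ∀ j < k, u j = w e j) : Function.update w e u ∈ A.lang := by
  have hlt (i : ℕ) : (f i).2 e < k := by
    induction i with
    | zero => simpa [hf.cnt_zero, Nat.pos_iff_ne_zero] using (hk 0).symm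
    | succ i ih => have := (hf.step i).snd_apply_le_add_one e; have := hk (i + 1); omega
  refine mem_lang_of_isLinRun
    ⟨hf.init, hf.cnt_zero, fun i => (hf.step i).congr fun d j hj => ?_⟩ hacc
  rcases eq_or_ne d e with rfl | hd
  · simpa using (hu j (hj.trans (hlt _))).symm
  · simp [hd]

def ofPartial (q₀ : Q) (δ : Q → σ → Fin n → Option Q) (prio : Q → ℕ) : AAPA σ Q n where
  init := .var q₀
  trans q a d := (δ q a d).elim .ff .var
  prio := prio

variable {q₀ : Q} {δ : Q → σ → Fin n → Option Q} {prio : Q → ℕ}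

theorem isNondet_ofPartial : (ofPartial q₀ δ prio).IsNondet :=
  ⟨.var q₀, fun q a d => by
    change ((δ q a d).elim PosBool.ff PosBool.var).IsDisj
    cases δ q a d
    exacts [PosBool.IsDisj.ff, PosBool.IsDisj.var _]⟩

theorem sat_init_ofPartial {q : Q} : PosBool.Sat {q} (ofPartial q₀ δ prio).init ↔ q = q₀ := by
  simp [ofPartial, PosBool.Sat, eq_comm]

theorem step_ofPartial_iff :
    (ofPartial q₀ δ prio).Step w x y ↔
      ∃ d, y.2 = Function.update x.2 d (x.2 d + 1) ∧ δ x.1 (w d (x.2 d)) d = some y.1 := by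
  refine exists_congr fun d => and_congr_right fun _ => ?_
  cases h : δ x.1 (w d (x.2 d)) d <;> simp [ofPartial, h, PosBool.Sat]

end AAPA

open AAPA

inductive Letter | a | b
  deriving DecidableEq

instance : Fintype Letter := ⟨{.a, .b}, by rintro (_ | _) <;> simp⟩

/-- The word `aⁿ b aᵐ b^ω`. -/
def blocks (n m : ℕ) (i : ℕ) : Letter :=
  if i = n ∨ n + m < i then .b else .a

def IsBlockAt (x : ℕ → Letter) (s k : ℕ) : Prop :=
  (∀ j < k, x (s + j) = .a) ∧ x (s + k) = .b

theorem IsBlockAt.unique {x : ℕ → Letter} {s k k' : ℕ} (h : IsBlockAt x s k)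
    (h' : IsBlockAt x s k') : k = k' := by
  by_contra hne
  rcases Nat.lt_or_gt_of_ne hne with hlt | hlt
  · simpa [h.2] using h'.1 k hlt
  · simpa [h'.2] using h.1 k' hlt

theorem isBlockAt_blocks_zero (n m : ℕ) : IsBlockAt (blocks n m) 0 n :=
  ⟨fun _ _ => if_neg (by omega), if_pos (by omega)⟩

theorem isBlockAt_blocks_succ (n m : ℕ) : IsBlockAt (blocks n m) (n + 1) m :=
  ⟨fun _ _ => if_neg (by omega), if_pos (by omega)⟩

def TwoEqualBlocks (x : ℕ → Letter) : Prop :=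
  ∃ k, IsBlockAt x 0 k ∧ IsBlockAt x (k + 1) k

theorem eq_of_twoEqualBlocks_blocks {n m : ℕ} (h : TwoEqualBlocks (blocks n m)) : n = m := by
  obtain ⟨k, h₀, h₁⟩ := h
  obtain rfl := h₀.unique (isBlockAt_blocks_zero n m)
  exact h₁.unique (isBlockAt_blocks_succ k m)

theorem not_twoEqualBlocks_const_a : ¬ TwoEqualBlocks fun _ => Letter.a :=
  fun ⟨_, h, _⟩ => by simpa using h.2

theorem splice_blocks (n m : ℕ) : splice (blocks n n) (blocks m m) n m = blocks n m := by
  funext i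
  unfold splice blocks
  split_ifs <;> first | rfl | omega

inductive BlockState | skip | cmp | pending (l : Letter) | done
  deriving DecidableEq

instance : Fintype BlockState :=
  ⟨{.skip, .cmp, .pending .a, .pending .b, .done}, by rintro (_ | _ | (_ | _) | _) <;> simp⟩

def blockStep : BlockState → Letter → Fin 2 → Option BlockState
  | .skip, .a, 0 => some .skip
  | .skip, .b, 0 => some .cmp
  | .cmp, l, 0 => some (.pending l)
  | .pending .a, .a, 1 => some .cmp
  | .pending .b, .b, 1 => some .done
  | .done, _, _ => some .done
  | _, _, _ => none

def blockPrio : BlockState → ℕ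
  | .done => 0
  | _ => 1

/-- Started in `cmp`, the automaton reads the two words alternately and checks that their first
`a`-blocks have the same length; started in `skip`, it first skips the first block of the first
word and then compares its second block with the first block of the second word. -/
def blockAut (q₀ : BlockState) : AAPA Letter BlockState 2 :=
  ofPartial q₀ blockStep blockPrio

def BothA (w : Fin 2 → ℕ → Letter) (s k : ℕ) : Prop :=
  ∀ j < k, w 0 (s + j) = .a ∧ w 1 j = .a

/-- The invariant of a comparison that started at position `s` of the first word. -/
def CmpInv (w : Fin 2 → ℕ → Letter) (s : ℕ) : BlockState × (Fin 2 → ℕ) → Prop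
  | (.skip, _) => False
  | (.cmp, c) => c 0 = s + c 1 ∧ BothA w s (c 1)
  | (.pending l, c) => c 0 = s + c 1 + 1 ∧ BothA w s (c 1) ∧ w 0 (s + c 1) = l
  | (.done, _) => ∃ k, IsBlockAt (w 0) s k ∧ IsBlockAt (w 1) 0 k

section BlockAutomata

variable {w : Fin 2 → ℕ → Letter} {q₀ : BlockState}

theorem CmpInv.step {s : ℕ} {x y : BlockState × (Fin 2 → ℕ)} (hx : CmpInv w s x)
    (h : (blockAut q₀).Step w x y) : CmpInv w s y := by
  obtain ⟨q, c⟩ := x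
  obtain ⟨q', c'⟩ := y
  rw [blockAut, step_ofPartial_iff, Fin.exists_fin_two] at h
  dsimp only at h
  cases q with
  | skip => exact hx.elim
  | done =>
    rcases h with ⟨-, hδ⟩ | ⟨-, hδ⟩ <;> simp only [blockStep, Option.some.injEq] at hδ <;>
      (subst hδ; exact hx)
  | cmp =>
    obtain ⟨hc, hA⟩ := hx
    rcases h with ⟨rfl, hδ⟩ | ⟨-, hδ⟩ <;>
      simp only [blockStep, Fin.isValue, Option.some.injEq, reduceCtorEq] at hδ
    subst hδ
    simp [CmpInv, hc, hA]
  | pending l =>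
    obtain ⟨hc, hA, hl⟩ := hx
    rcases h with ⟨-, hδ⟩ | ⟨rfl, hδ⟩
    · simp [blockStep] at hδ
    cases l <;> cases hr : w 1 (c 1) <;>
      simp only [blockStep, Fin.isValue, hr, Option.some.injEq, reduceCtorEq] at hδ <;> subst hδ
    · simp only [CmpInv, Function.update_self, Function.update_of_ne zero_ne_one, hc]
      refine ⟨by omega, fun j hj => ?_⟩
      rcases (Nat.lt_succ_iff.1 hj).lt_or_eq with hj | rfl
      exacts [hA j hj, ⟨hl, hr⟩]
    · exact ⟨c 1, ⟨fun j hj => (hA j hj).1, hl⟩, fun j hj => by simpa using (hA j hj).2, by simpa⟩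

def SkipInv (w : Fin 2 → ℕ → Letter) (x : BlockState × (Fin 2 → ℕ)) : Prop :=
  (x.1 = .skip ∧ x.2 1 = 0 ∧ ∀ j < x.2 0, w 0 j = .a) ∨
    ∃ n, IsBlockAt (w 0) 0 n ∧ CmpInv w (n + 1) x

theorem SkipInv.step {x y : BlockState × (Fin 2 → ℕ)} (hx : SkipInv w x)
    (h : (blockAut q₀).Step w x y) : SkipInv w y := by
  rcases hx with ⟨hq, h1, ha⟩ | ⟨n, hn, hx⟩
  · obtain ⟨q, c⟩ := x
    obtain ⟨q', c'⟩ := y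
    rw [blockAut, step_ofPartial_iff, Fin.exists_fin_two] at h
    dsimp only at hq h1 ha h ⊢
    subst hq
    rcases h with ⟨rfl, hδ⟩ | ⟨-, hδ⟩
    · cases hr : w 0 (c 0) <;>
        simp only [blockStep, Fin.isValue, hr, Option.some.injEq] at hδ <;> subst hδ
      · refine .inl ⟨rfl, by simpa [Function.update_of_ne one_ne_zero] using h1, fun j hj => ?_⟩
        rcases (Nat.lt_succ_iff.1 (by simpa using hj)).lt_or_eq with hj | rfl
        exacts [ha j hj, hr]
      · refine .inr ⟨c 0, ⟨by simpa using ha, by simpa using hr⟩, ?_⟩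
        simp [CmpInv, BothA, h1]
    · simp [blockStep] at hδ
  · exact .inr ⟨n, hn, hx.step h⟩

theorem mem_lang_blockAut_iff :
    w ∈ (blockAut q₀).lang ↔ ∃ c, ReflTransGen ((blockAut q₀).Step w) (q₀, 0) (.done, c) := by
  refine ⟨fun hw => ?_, fun ⟨c, hreach⟩ => ?_⟩
  · obtain ⟨q, ⟨q', c⟩, hq, hreach, heven⟩ := exists_reflTransGen_even_prio isNondet_ofPartial hw
    obtain rfl := sat_init_ofPartial.1 hq
    cases q' <;> simp only [ofPartial, blockPrio, Nat.not_even_one] at heven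
    exact ⟨c, hreach⟩
  · refine mem_lang_of_reflTransGen_sink 0 (sat_init_ofPartial.2 rfl) hreach (fun _ => ?_) ?_
    · simp [blockAut, ofPartial, blockStep, PosBool.Sat]
    · simp [blockAut, ofPartial, blockPrio]

theorem step_blockAut {q q' : BlockState} {c c' : Fin 2 → ℕ} (d : Fin 2)
    (hδ : blockStep q (w d (c d)) d = some q') (hc : c' = Function.update c d (c d + 1)) :
    (blockAut q₀).Step w (q, c) (q', c') :=
  step_ofPartial_iff.2 ⟨d, hc, hδ⟩

theorem reflTransGen_cmp {s k : ℕ} (h : BothA w s k) :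
    ReflTransGen ((blockAut q₀).Step w) (.cmp, ![s, 0]) (.cmp, ![s + k, k]) := by
  induction k with
  | zero => exact .refl
  | succ k ih =>
    obtain ⟨h, ha, hb⟩ := Nat.forall_lt_succ_right.1 h
    have h₁ : (blockAut q₀).Step w (.cmp, ![s + k, k]) (.pending .a, ![s + k + 1, k]) :=
      step_blockAut 0 (by simp [blockStep, ha]) (by ext i; fin_cases i <;> simp)
    have h₂ : (blockAut q₀).Step w (.pending .a, ![s + k + 1, k]) (.cmp, ![s + (k + 1), k + 1]) :=
      step_blockAut 1 (by simp [blockStep, hb]) (by ext i; fin_cases i <;> simp [add_assoc])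
    exact ((ih h).tail h₁).tail h₂

theorem reflTransGen_done {s k : ℕ} (h₀ : IsBlockAt (w 0) s k) (h₁ : IsBlockAt (w 1) 0 k) :
    ReflTransGen ((blockAut q₀).Step w) (.cmp, ![s, 0]) (.done, ![s + k + 1, k + 1]) := by
  have hb₀ : (blockAut q₀).Step w (.cmp, ![s + k, k]) (.pending .b, ![s + k + 1, k]) :=
    step_blockAut 0 (by simp [blockStep, h₀.2]) (by ext i; fin_cases i <;> simp)
  have hb₁ : (blockAut q₀).Step w (.pending .b, ![s + k + 1, k]) (.done, ![s + k + 1, k + 1]) :=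
    step_blockAut 1 (by simp [blockStep, show w 1 k = .b by simpa using h₁.2])
      (by ext i; fin_cases i <;> simp)
  exact ((reflTransGen_cmp fun j hj => ⟨h₀.1 j hj, by simpa using h₁.1 j hj⟩).tail hb₀).tail hb₁

theorem reflTransGen_skip {n : ℕ} (h : ∀ j < n, w 0 j = .a) :
    ReflTransGen ((blockAut q₀).Step w) (.skip, ![0, 0]) (.skip, ![n, 0]) := by
  induction n with
  | zero => exact .refl
  | succ n ih =>
    obtain ⟨h, ha⟩ := Nat.forall_lt_succ_right.1 h
    exact (ih h).tail (step_blockAut 0 (by simp [blockStep, ha]) (by ext i; fin_cases i <;> simp))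

theorem mem_lang_blockAut_cmp_iff :
    w ∈ (blockAut .cmp).lang ↔ ∃ k, IsBlockAt (w 0) 0 k ∧ IsBlockAt (w 1) 0 k := by
  refine ⟨fun hw => ?_, fun ⟨k, h₀, h₁⟩ => ?_⟩
  · obtain ⟨c, hreach⟩ := mem_lang_blockAut_iff.1 hw
    have hinv (x) (h : ReflTransGen ((blockAut .cmp).Step w) (.cmp, 0) x) : CmpInv w 0 x := by
      induction h with
      | refl => simp [CmpInv, BothA]
      | tail _ hs ih => exact ih.step hs
    simpa [CmpInv] using hinv _ hreach
  · refine mem_lang_blockAut_iff.2 ⟨![0 + k + 1, k + 1], ?_⟩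
    convert reflTransGen_done h₀ h₁ using 3
    ext i; fin_cases i <;> rfl

theorem mem_lang_blockAut_skip_iff : w ∈ (blockAut .skip).lang ↔
    ∃ n k, IsBlockAt (w 0) 0 n ∧ IsBlockAt (w 0) (n + 1) k ∧ IsBlockAt (w 1) 0 k := by
  refine ⟨fun hw => ?_, fun ⟨n, k, h, h₀, h₁⟩ => ?_⟩
  · obtain ⟨c, hreach⟩ := mem_lang_blockAut_iff.1 hw
    have hinv (x) (h : ReflTransGen ((blockAut .skip).Step w) (.skip, 0) x) : SkipInv w x := by
      induction h with
      | refl => simp [SkipInv]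
      | tail _ hs ih => exact ih.step hs
    simpa [SkipInv, CmpInv] using hinv _ hreach
  · have hb : (blockAut .skip).Step w (.skip, ![n, 0]) (.cmp, ![n + 1, 0]) :=
      step_blockAut 0 (by simp [blockStep, show w 0 n = .b by simpa using h.2])
        (by ext i; fin_cases i <;> simp)
    refine mem_lang_blockAut_iff.2 ⟨![n + 1 + k + 1, k + 1], ?_⟩
    convert ((reflTransGen_skip (by simpa using h.1)).tail hb).trans (reflTransGen_done h₀ h₁)
      using 3
    ext i; fin_cases i <;> rfl

theorem twoEqualBlocks_of_mem_inter (hw : w ∈ (blockAut .cmp).lang ∩ (blockAut .skip).lang) :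
    TwoEqualBlocks (w 0) := by
  obtain ⟨k, hk₀, hk₁⟩ := mem_lang_blockAut_cmp_iff.1 hw.1
  obtain ⟨n, k', hn, hk'₀, hk'₁⟩ := mem_lang_blockAut_skip_iff.1 hw.2
  obtain rfl := hk₁.unique hk'₁
  obtain rfl := hn.unique hk₀
  exact ⟨n, hn, hk'₀⟩

theorem blocks_mem_inter (p : ℕ) :
    (fun _ => blocks p p) ∈ (blockAut .cmp).lang ∩ (blockAut .skip).lang :=
  ⟨mem_lang_blockAut_cmp_iff.2 ⟨p, isBlockAt_blocks_zero p p, isBlockAt_blocks_zero p p⟩,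
    mem_lang_blockAut_skip_iff.2
      ⟨p, p, isBlockAt_blocks_zero p p, isBlockAt_blocks_succ p p, isBlockAt_blocks_zero p p⟩⟩

end BlockAutomata

theorem exists_mem_lang_not_twoEqualBlocks {Q : Type*} [Finite Q] {B : AAPA Letter Q 2}
    (hB : B.IsNondet) (hmem : ∀ p, ∃ w ∈ B.lang, w 0 = blocks p p) :
    ∃ w ∈ B.lang, ¬ TwoEqualBlocks (w 0) := by
  by_contra! H
  choose w hw hw0 using hmem
  choose f hf hacc using fun p => exists_isLinRun_of_mem_lang hB (hw p)
  have hreach (p : ℕ) : ∃ T, (f p T).2 0 = p := by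
    by_contra! hne
    refine not_twoEqualBlocks_const_a ?_
    simpa using H _ <| (hf p).mem_lang_update_of_forall_ne (hacc p) hne (u := fun _ => .a)
      fun j hj => by rw [hw0, blocks, if_neg (by omega)]
  choose T hT using hreach
  obtain ⟨n, m, hnm, hq⟩ := Finite.exists_ne_map_eq_of_infinite fun p => (f p (T p)).1
  have := H _ (mem_lang_splice (hf n) (hf m) (hacc m) hq)
  simp only [hT, hw0, splice_blocks] at this
  exact hnm (eq_of_twoEqualBlocks_blocks this)

/-- NAPA are not closed under intersection: there exist a finite
alphabet `σ` and two NAPA `A₁`, `A₂` over `σ` with two directions such that no NAPA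
over `σ` with two directions recognizes `L(A₁) ∩ L(A₂)`. -/
theorem napa_not_closed_under_intersection :
    ∃ (σ : Type) (_ : Fintype σ) (Q₁ Q₂ : Type) (_ : Fintype Q₁) (_ : Fintype Q₂)
      (_ : Nonempty Q₁) (_ : Nonempty Q₂)
      (A₁ : AAPA σ Q₁ 2) (A₂ : AAPA σ Q₂ 2),
      A₁.IsNondet ∧ A₂.IsNondet ∧
      ∀ (Q : Type) (_ : Fintype Q) (_ : Nonempty Q) (B : AAPA σ Q 2),
        B.IsNondet → B.lang ≠ A₁.lang ∩ A₂.lang := by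
  refine ⟨Letter, inferInstance, BlockState, BlockState, inferInstance, inferInstance, ⟨.done⟩,
    ⟨.done⟩, blockAut .cmp, blockAut .skip, isNondet_ofPartial, isNondet_ofPartial, ?_⟩
  intro Q _ _ B hB hL
  obtain ⟨w, hw, hnot⟩ := exists_mem_lang_not_twoEqualBlocks hB fun p =>
    ⟨fun _ => blocks p p, hL ▸ blocks_mem_inter p, rfl⟩
  exact hnot (twoEqualBlocks_of_mem_inter (hL ▸ hw))
end

section
/- Let Σ = {a,b} and let L = {(aⁿ·b^ω, a²ⁿ·b^ω, a³ⁿ·b^ω) : n ∈ ℕ} ⊆ (Σ^ω)³, whose encodings are the words (a,a,a)ⁿ(b,a,a)ⁿ(b,b,a)ⁿ(b,b,b)^ω over Σ³. Then L is recognized by a NAPA over Σ with three directions, but there is no APA over the alphabet Σ³ that accepts exactly the encodings enc(w₁,w₂,w₃) of the tuples (w₁,w₂,w₃) ∈ L. -/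
/-- The two-letter alphabet `Σ = {a, b}`. -/
inductive AB : Type
  | a : AB
  | b : AB
  deriving DecidableEq

instance : Fintype AB := ⟨{AB.a, AB.b}, fun x => by cases x <;> simp⟩

/-- The `ω`-word `aᵐ·b^ω`. -/
def abWord (m : ℕ) : ℕ → AB := fun i => if i < m then AB.a else AB.b

/-- The language `L = {(aⁿ·b^ω, a²ⁿ·b^ω, a³ⁿ·b^ω) : n ∈ ℕ}`. -/
def abLang : Set (Fin 3 → ℕ → AB) :=
  {w | ∃ m : ℕ, w 0 = abWord m ∧ w 1 = abWord (2 * m) ∧ w 2 = abWord (3 * m)}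

/-- The encoding of a tuple of `ω`-words as a single `ω`-word over the product
alphabet: `enc(w₁,…,wₙ)(j) = (w₁(j),…,wₙ(j))`. -/
def encTuple {σ : Type u} {n : ℕ} (w : Fin n → ℕ → σ) : ℕ → Fin n → σ :=
  fun j i => w i j

/-- The language of single `ω`-words of an automaton with one direction. -/
def lang1 {Γ : Type u} {Q : Type v} (A : AAPA Γ Q 1) : Set (ℕ → Γ) :=
  {u | (fun _ => u) ∈ A.lang}

/-!
The NAPA reads the three words in rounds of six steps: one letter of the first word, two of the
second and three of the third. A tuple lies in `L` exactly when the letters read along this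
schedule form `a^(6n) b^ω`, and this is what the automaton checks, switching from `a` to `b` only
at the start of a round. A run of a NAPA contains an accepting branch, so its language is that of
its accepting linear runs.

In a run of an automaton with one direction, a node at depth `k + 1` reads position `k`. If every
label at depth `i + 1` also occurs at depth `j + 1`, grafting the subtrees below depth `j + 1`
onto depth `i + 1` yields an accepting run on the word with positions `[i, j)` erased. For
`n = 2 ^ |Q| + 1` pigeonhole gives `i < j < n` with equal label sets, and erasing `j - i` letters
`(a,a,a)` from the encoding of `(aⁿb^ω, a²ⁿb^ω, a³ⁿb^ω)` leaves a word that encodes no tuple of `L`.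
-/

section InfOften

variable {α : Type*}

def infOften (f : ℕ → α) : Set α := {a | ∀ N, ∃ i, N ≤ i ∧ f i = a}

theorem infOften_comp_add (f : ℕ → α) (k : ℕ) : infOften (fun i => f (i + k)) = infOften f := by
  ext a
  constructor
  · intro h N
    obtain ⟨i, hi, rfl⟩ := h N
    exact ⟨i + k, by omega, rfl⟩
  · intro h N
    obtain ⟨i, hi, rfl⟩ := h (N + k)
    exact ⟨i - k, by omega, by simp only [Nat.sub_add_cancel (by omega : k ≤ i)]⟩

theorem infOften_eq_singleton {f : ℕ → α} {a : α} (h : ∀ᶠ i in Filter.atTop, f i = a) :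
    infOften f = {a} := by
  obtain ⟨N₀, hN₀⟩ := Filter.eventually_atTop.1 h
  ext b
  constructor
  · intro hb
    obtain ⟨i, hi, rfl⟩ := hb N₀
    exact hN₀ i hi
  · rintro rfl N
    exact ⟨max N N₀, le_max_left _ _, hN₀ _ (le_max_right _ _)⟩

end InfOften

theorem PosBool.IsDisj.exists_sat_singleton_s6 {Q : Type*} {f : PosBool Q} {C : Set Q}
    (hf : f.IsDisj) (h : f.Sat C) : ∃ q ∈ C, f.Sat {q} := by
  induction hf with
  | ff => exact h.elim
  | var q => exact ⟨q, h, rfl⟩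
  | or _ _ ihf ihg =>
    rcases h with h | h
    · obtain ⟨q, hq, hfq⟩ := ihf h
      exact ⟨q, hq, Or.inl hfq⟩
    · obtain ⟨q, hq, hgq⟩ := ihg h
      exact ⟨q, hq, Or.inr hgq⟩

def lineTree : Set (List ℕ) := {t | ∀ x ∈ t, x = 0}

theorem setOf_append_mem_lineTree {Q : Type*} (s : ℕ → Q) {t : List ℕ} (ht : t ∈ lineTree) :
    {q | ∃ m, t ++ [m] ∈ lineTree ∧ s ((t ++ [m]).length - 1) = q} = {s t.length} := by
  ext q
  simp only [lineTree, List.mem_append, List.mem_singleton, Set.mem_ofPred_eq, List.length_append,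
    List.length_singleton, Nat.add_sub_cancel, Set.mem_singleton_iff]
  constructor
  · rintro ⟨m, -, rfl⟩
    rfl
  · rintro rfl
    exact ⟨0, fun x hx => hx.elim (ht x) id, rfl⟩

namespace AAPA

variable {σ Q : Type*} {n : ℕ} {A : AAPA σ Q n} {w : Fin n → ℕ → σ}

namespace Run

theorem IsPath.length_eq {r : A.Run w} {p : ℕ → List ℕ} (hp : r.IsPath p) (i : ℕ) :
    (p i).length = i := by
  induction i with
  | zero => simp [hp.1]
  | succ i ih =>
    obtain ⟨m, hm⟩ := (hp.2 i).1
    simp [hm, ih]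

theorem take_mem (r : A.Run w) {t : List ℕ} (ht : t ∈ r.tree) (i : ℕ) : t.take i ∈ r.tree := by
  induction t using List.reverseRecOn with
  | nil => simpa using ht
  | append_singleton s x ih =>
    by_cases h : i ≤ s.length
    · rw [List.take_append_of_le_length h]
      exact ih (r.prefix_closed s x ht)
    · rwa [List.take_of_length_le (by simp; omega)]

theorem exists_isPath_of_chain (r : A.Run w) {X : ℕ → List ℕ} {K : ℕ} (hX : ∀ i, X i ∈ r.tree)
    (hsucc : ∀ i, ∃ m, X (i + 1) = X i ++ [m]) (hlen : ∀ i, (X i).length = i + K) :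
    ∃ P, r.IsPath P ∧ ∀ i, X i = P (i + K) := by
  have hprefix : ∀ i k, X i <+: X (i + k) := by
    intro i k
    induction k with
    | zero => exact List.prefix_refl _
    | succ k ih =>
      obtain ⟨m, hm⟩ := hsucc (i + k)
      exact ih.trans (hm ▸ List.prefix_append _ _)
  have htake : ∀ i k, (X (i + k)).take i = (X i).take i := by
    intro i k
    rw [List.prefix_iff_eq_take.1 (hprefix i k), List.take_take, hlen,
      Nat.min_eq_left (by omega)]
  refine ⟨fun i => (X i).take i, ⟨by simp, fun i => ⟨?_, take_mem r (hX _) _⟩⟩, fun i => ?_⟩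
  · refine ⟨(X (i + 1))[i]'(by rw [hlen]; omega), ?_⟩
    dsimp only
    rw [List.take_add_one, ← htake i 1, List.getElem?_eq_getElem]
    rfl
  · have h := List.prefix_iff_eq_take.1 (hprefix i K)
    rw [hlen] at h
    exact h

def levelLabels (r : A.Run w) (k : ℕ) : Set Q :=
  r.label '' {t | t ∈ r.tree ∧ t.length = k}

end Run

def IsLinearRun (A : AAPA σ Q n) (w : Fin n → ℕ → σ) (s : ℕ → Q) (c : ℕ → Fin n → ℕ) : Prop :=
  PosBool.Sat {s 0} A.init ∧ c 0 = 0 ∧ ∀ i, ∃ d,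
    c (i + 1) = Function.update (c i) d (c i d + 1) ∧
    PosBool.Sat {s (i + 1)} (A.trans (s i) (w d (c i d)) d)

variable {s : ℕ → Q} {c : ℕ → Fin n → ℕ}

def IsLinearRun.toRun (hrun : A.IsLinearRun w s c) : A.Run w where
  tree := lineTree
  label t := s (t.length - 1)
  cnt t := c (t.length - 1)
  root_mem := by simp [lineTree]
  prefix_closed t m h x hx := h x (List.mem_append_left _ hx)
  has_child t ht := ⟨0, fun x hx => (List.mem_append.1 hx).elim (ht x) List.eq_of_mem_singleton⟩
  cnt_init t _ ht := by rw [Nat.sub_eq_zero_of_le ht, hrun.2.1]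
  init_sat := by
    have h := setOf_append_mem_lineTree s (t := []) (by simp [lineTree])
    simp only [List.nil_append] at h
    rw [h]
    exact hrun.1
  step t ht hne := by
    obtain ⟨d, hcd, hsat⟩ := hrun.2.2 (t.length - 1)
    have hlen : t.length - 1 + 1 = t.length := Nat.succ_pred_eq_of_pos (List.length_pos_iff.2 hne)
    refine ⟨d, fun m _ => by simpa [hlen] using hcd, ?_⟩
    rw [setOf_append_mem_lineTree s ht, ← hlen]
    exact hsat

theorem IsLinearRun.toRun_accepting (hrun : A.IsLinearRun w s c)
    (hacc : Even (sInf (infOften fun i => A.prio (s i)))) : hrun.toRun.Accepting := by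
  intro p hp
  show Even (sInf (infOften fun i => A.prio (s ((p i).length - 1))))
  rw [← infOften_comp_add _ 1]
  simpa [hp.length_eq] using hacc

theorem IsNondet.exists_isLinearRun (hA : A.IsNondet) (hw : w ∈ A.lang) :
    ∃ s c, A.IsLinearRun w s c ∧ Even (sInf (infOften fun i => A.prio (s i))) := by
  obtain ⟨r, hr⟩ := hw
  have hnext : ∀ t ∈ r.tree, ∃ m, t ++ [m] ∈ r.tree ∧
      (t = [] → PosBool.Sat {r.label [m]} A.init) ∧
      (t ≠ [] → ∃ d, r.cnt (t ++ [m]) = Function.update (r.cnt t) d (r.cnt t d + 1) ∧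
        PosBool.Sat {r.label (t ++ [m])} (A.trans (r.label t) (w d (r.cnt t d)) d)) := by
    intro t ht
    rcases eq_or_ne t [] with rfl | hne
    · obtain ⟨q, ⟨m, hm, rfl⟩, hq⟩ := hA.1.exists_sat_singleton_s6 r.init_sat
      exact ⟨m, hm, fun _ => hq, fun h => (h rfl).elim⟩
    · obtain ⟨d, hcnt, hsat⟩ := r.step t ht hne
      obtain ⟨q, ⟨m, hm, rfl⟩, hq⟩ := (hA.2 _ _ _).exists_sat_singleton_s6 hsat
      exact ⟨m, hm, fun h => (hne h).elim, fun _ => ⟨d, hcnt m hm, hq⟩⟩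
  choose! next hnext_mem hnext_root hnext_step using hnext
  let p : ℕ → List ℕ := fun i => (fun t => t ++ [next t])^[i] []
  have hp_succ : ∀ i, p (i + 1) = p i ++ [next (p i)] := fun i =>
    Function.iterate_succ_apply' _ i []
  have hp_mem : ∀ i, p i ∈ r.tree := by
    intro i
    induction i with
    | zero => exact r.root_mem
    | succ i ih => rw [hp_succ]; exact hnext_mem _ ih
  have hp_path : r.IsPath p := ⟨rfl, fun i => ⟨⟨_, hp_succ i⟩, hp_mem _⟩⟩
  have hp_ne : ∀ i, p (i + 1) ≠ [] := by simp [hp_succ]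
  refine ⟨fun i => r.label (p (i + 1)), fun i => r.cnt (p (i + 1)),
    ⟨hnext_root [] r.root_mem rfl, r.cnt_init _ (hp_mem 1) (by simp [hp_path.length_eq]),
      fun i => ?_⟩, ?_⟩
  · dsimp only
    rw [hp_succ (i + 1)]
    exact hnext_step _ (hp_mem _) (hp_ne i)
  · rw [infOften_comp_add (fun i => A.prio (r.label (p i))) 1]
    exact hr p hp_path

theorem IsNondet.mem_lang_iff (hA : A.IsNondet) :
    w ∈ A.lang ↔ ∃ s c, A.IsLinearRun w s c ∧ Even (sInf (infOften fun i => A.prio (s i))) :=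
  ⟨hA.exists_isLinearRun, fun ⟨_, _, hrun, hacc⟩ => ⟨hrun.toRun, hrun.toRun_accepting hacc⟩⟩

end AAPA

theorem abWord_mul_apply {k : ℕ} (hk : 0 < k) (m i : ℕ) : abWord (k * m) i = abWord m (i / k) := by
  simp only [abWord, Nat.div_lt_iff_lt_mul hk, mul_comm k]

theorem abWord_injective : Function.Injective abWord := by
  intro m m' h
  by_contra hne
  have := congrFun h (min m m')
  simp only [abWord] at this
  split_ifs at this <;> omega

theorem mem_abLang_iff {w : Fin 3 → ℕ → AB} :
    w ∈ abLang ↔ ∃ m, ∀ d : Fin 3, w d = abWord ((d + 1 : ℕ) * m) := by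
  refine exists_congr fun m => ⟨fun ⟨h0, h1, h2⟩ d => ?_, fun h => ⟨?_, h 1, h 2⟩⟩
  · fin_cases d
    · simpa using h0
    · exact h1
    · exact h2
  · simpa using h 0

def eraseIco {α : Type*} (u : ℕ → α) (i j : ℕ) : ℕ → α :=
  fun k => if k < i then u k else u (k + (j - i))

theorem eraseIco_abWord {m i j : ℕ} (hij : i ≤ j) (hjm : j ≤ m) :
    eraseIco (abWord m) i j = abWord (m - (j - i)) := by
  funext k
  simp only [eraseIco, abWord]
  split_ifs <;> first | rfl | omega

theorem exists_eq_abWord_six_mul {x : ℕ → AB}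
    (hx : ∀ i, x (i + 1) = x i ∨ (6 ∣ i + 1 ∧ x i = .a)) (hb : ∃ i, x i = .b) :
    ∃ j, x = abWord (6 * j) := by
  have hstay : ∀ i, x i = .b → x (i + 1) = .b := fun i hi => by
    rcases hx i with h | ⟨-, h⟩ <;> simp_all
  have hafter : ∀ i, Nat.find hb ≤ i → x i = .b := fun i hi => by
    induction i, hi using Nat.le_induction with
    | base => exact Nat.find_spec hb
    | succ i _ ih => exact hstay i ih
  have hbefore : ∀ i < Nat.find hb, x i = .a := fun i hi => by
    cases h : x i
    · rfl
    · exact (Nat.find_min hb hi h).elim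
  have hdvd : 6 ∣ Nat.find hb := by
    rcases h : Nat.find hb with _ | i
    · exact dvd_zero 6
    · rcases hx i with hxi | ⟨hdvd, -⟩
      · have := hbefore i (by omega)
        have := hafter (i + 1) h.le
        simp_all
      · exact hdvd
  refine ⟨Nat.find hb / 6, funext fun i => ?_⟩
  rw [Nat.mul_div_cancel' hdvd, abWord]
  split_ifs with hi
  · exact hbefore i hi
  · exact hafter i (not_lt.1 hi)

namespace ABNapa

open Fin.NatCast

def roundDir : Fin 6 → Fin 3 := ![0, 1, 1, 2, 2, 2]

def schedDir (k : ℕ) : Fin 3 := roundDir k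

-- the number of letters of each word read in the first `k` steps
def schedCnt (k : ℕ) : Fin 3 → ℕ :=
  ![(k + 5) / 6, (k + 4) / 6 + (k + 3) / 6, (k + 2) / 6 + (k + 1) / 6 + k / 6]

def scheduled (w : Fin 3 → ℕ → AB) (k : ℕ) : AB := w (schedDir k) (schedCnt k (schedDir k))

theorem schedCnt_zero : schedCnt 0 = 0 := by
  funext d
  fin_cases d <;> rfl

theorem schedDir_six_mul_add (j c : ℕ) : schedDir (6 * j + c) = roundDir c := by
  rw [schedDir]
  congr 1
  ext
  rw [Fin.val_natCast, Fin.val_natCast]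
  omega

theorem schedCnt_succ (k : ℕ) :
    schedCnt (k + 1) = Function.update (schedCnt k) (schedDir k) (schedCnt k (schedDir k) + 1) := by
  obtain ⟨j, c, hc, rfl⟩ : ∃ j c, c < 6 ∧ k = 6 * j + c := ⟨k / 6, k % 6, by omega, by omega⟩
  funext d
  rw [schedDir_six_mul_add j c]
  interval_cases c <;> fin_cases d <;> simp [schedCnt, roundDir, Function.update_apply] <;> omega

theorem schedCnt_schedDir_div (k : ℕ) :
    schedCnt k (schedDir k) / ((schedDir k : ℕ) + 1) = k / 6 := by
  obtain ⟨j, c, hc, rfl⟩ : ∃ j c, c < 6 ∧ k = 6 * j + c := ⟨k / 6, k % 6, by omega, by omega⟩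
  rw [schedDir_six_mul_add j c]
  interval_cases c <;> simp [schedCnt, roundDir] <;> omega

theorem exists_schedDir_eq (d : Fin 3) (i : ℕ) : ∃ k, schedDir k = d ∧ schedCnt k d = i := by
  fin_cases d
  · refine ⟨6 * i + 0, ?_⟩
    rw [schedDir_six_mul_add i 0]
    simp [schedCnt, roundDir]
    omega
  · obtain ⟨j, e, he, rfl⟩ : ∃ j e, e < 2 ∧ i = 2 * j + e := ⟨i / 2, i % 2, by omega, by omega⟩
    refine ⟨6 * j + (1 + e), ?_⟩
    rw [schedDir_six_mul_add j _]
    interval_cases e <;> simp [schedCnt, roundDir] <;> omega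
  · obtain ⟨j, e, he, rfl⟩ : ∃ j e, e < 3 ∧ i = 3 * j + e := ⟨i / 3, i % 3, by omega, by omega⟩
    refine ⟨6 * j + (3 + e), ?_⟩
    rw [schedDir_six_mul_add j _]
    interval_cases e <;> simp [schedCnt, roundDir] <;> omega

theorem mem_abLang_iff_scheduled {w : Fin 3 → ℕ → AB} :
    w ∈ abLang ↔ ∃ m, scheduled w = abWord (6 * m) := by
  rw [mem_abLang_iff]
  refine exists_congr fun m => ⟨fun h => funext fun k => ?_, fun h d => funext fun i => ?_⟩
  · rw [scheduled, h, abWord_mul_apply (by omega), schedCnt_schedDir_div,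
      abWord_mul_apply (by omega)]
  · obtain ⟨k, rfl, rfl⟩ := exists_schedDir_eq d i
    have hk : w (schedDir k) (schedCnt k (schedDir k)) = abWord (6 * m) k := congrFun h k
    rw [hk, abWord_mul_apply (by omega), abWord_mul_apply (by omega),
      schedCnt_schedDir_div]

-- The state `(k, x)` is at step `k` of a round and has just read `x`.
def automaton : AAPA AB (Fin 6 × AB) 3 where
  init := .var (0, .a)
  trans q x d :=
    if d = roundDir q.1 ∧ (x = q.2 ∨ (q.1 = 0 ∧ q.2 = .a)) then .var (q.1 + 1, x) else .ff
  prio q := if q.2 = .b then 0 else 1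

theorem automaton_isNondet : automaton.IsNondet := by
  refine ⟨.var _, fun q x d => ?_⟩
  simp only [automaton]
  split_ifs
  exacts [.var _, .ff]

theorem sat_singleton_trans_iff {q q' : Fin 6 × AB} {x : AB} {d : Fin 3} :
    (automaton.trans q x d).Sat {q'} ↔
      d = roundDir q.1 ∧ (x = q.2 ∨ (q.1 = 0 ∧ q.2 = .a)) ∧ q' = (q.1 + 1, x) := by
  simp only [automaton]
  split_ifs with h
  · simp only [PosBool.Sat, Set.mem_singleton_iff]
    exact ⟨fun e => ⟨h.1, h.2, e.symm⟩, fun e => e.2.2.symm⟩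
  · simp only [PosBool.Sat, false_iff]
    tauto

theorem mem_abLang_of_isLinearRun {w : Fin 3 → ℕ → AB} {s : ℕ → Fin 6 × AB} {c : ℕ → Fin 3 → ℕ}
    (hrun : automaton.IsLinearRun w s c)
    (hacc : Even (sInf (infOften fun i => automaton.prio (s i)))) : w ∈ abLang := by
  obtain ⟨hinit, hc0, hstep⟩ := hrun
  have hsc : ∀ i, (s i).1 = i ∧ c i = schedCnt i := by
    intro i
    induction i with
    | zero =>
      simp only [automaton, PosBool.Sat, Set.mem_singleton_iff] at hinit
      simp [← hinit, hc0, schedCnt_zero]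
    | succ i ih =>
      obtain ⟨d, hcd, hsat⟩ := hstep i
      obtain ⟨rfl, -, hs⟩ := sat_singleton_trans_iff.1 hsat
      refine ⟨by simp [hs, ih.1], ?_⟩
      rw [hcd, ih.2, ih.1, schedCnt_succ]
      rfl
  have hnext : ∀ i, s (i + 1) = (((i + 1 : ℕ) : Fin 6), scheduled w i) ∧
      (scheduled w i = (s i).2 ∨ (6 ∣ i ∧ (s i).2 = .a)) := by
    intro i
    obtain ⟨d, -, hsat⟩ := hstep i
    obtain ⟨rfl, hadm, hs⟩ := sat_singleton_trans_iff.1 hsat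
    rw [(hsc i).1, (hsc i).2, Fin.natCast_eq_zero] at *
    exact ⟨by simpa [scheduled, schedDir] using hs, hadm⟩
  have hb : ∃ i, scheduled w i = .b := by
    by_contra! ha
    have hprio : ∀ i, automaton.prio (s (i + 1)) = 1 := fun i => by
      simp [automaton, (hnext i).1, ha i]
    rw [← infOften_comp_add _ 1, infOften_eq_singleton (.of_forall hprio), csInf_singleton]
      at hacc
    exact Nat.not_even_one hacc
  refine mem_abLang_iff_scheduled.2 (exists_eq_abWord_six_mul (fun i => ?_) hb)
  simpa [(hnext i).1] using (hnext (i + 1)).2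

theorem exists_isLinearRun_of_mem_abLang {w : Fin 3 → ℕ → AB} (hw : w ∈ abLang) :
    ∃ s c, automaton.IsLinearRun w s c ∧
      Even (sInf (infOften fun i => automaton.prio (s i))) := by
  obtain ⟨m, hm⟩ := mem_abLang_iff_scheduled.1 hw
  refine ⟨fun i => ((i : Fin 6), abWord (6 * m + 1) i), schedCnt,
    ⟨by simp [automaton, PosBool.Sat, abWord], schedCnt_zero,
      fun i => ⟨schedDir i, schedCnt_succ i, ?_⟩⟩, ?_⟩
  · have hi : w (schedDir i) (schedCnt i (schedDir i)) = abWord (6 * m) i := congrFun hm i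
    rw [sat_singleton_trans_iff]
    refine ⟨rfl, ?_, ?_⟩
    · rw [hi, Fin.natCast_eq_zero]
      simp only [abWord]
      split_ifs <;> simp <;> omega
    · simp only [Nat.cast_succ, Prod.mk.injEq, true_and]
      rw [hi]
      simp only [abWord]
      split_ifs <;> first | rfl | omega
  · have h0 : ∀ᶠ i : ℕ in Filter.atTop, automaton.prio ((i : Fin 6), abWord (6 * m + 1) i) = 0 :=
      Filter.eventually_atTop.2 ⟨6 * m + 1, fun i hi => by simp [automaton, abWord]; omega⟩
    rw [infOften_eq_singleton h0, csInf_singleton]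
    exact Even.zero

theorem lang_automaton : automaton.lang = abLang := by
  ext w
  rw [automaton_isNondet.mem_lang_iff]
  exact ⟨fun ⟨_, _, hrun, hacc⟩ => mem_abLang_of_isLinearRun hrun hacc,
    exists_isLinearRun_of_mem_abLang⟩

end ABNapa

namespace AAPA.Run

variable {Γ Q : Type*} {C : AAPA Γ Q 1} {u : ℕ → Γ}

theorem cnt_eq_length_sub_one (r : C.Run fun _ => u) {t : List ℕ} (ht : t ∈ r.tree) (d : Fin 1) :
    r.cnt t d = t.length - 1 := by
  induction t using List.reverseRecOn with
  | nil => simp [r.cnt_init [] ht (by simp)]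
  | append_singleton s x ih =>
    have hs := r.prefix_closed s x ht
    rcases eq_or_ne s [] with rfl | hne
    · rw [List.nil_append] at ht ⊢
      simp [r.cnt_init _ ht (by simp)]
    · obtain ⟨d', hcnt, -⟩ := r.step s hs hne
      obtain rfl := Subsingleton.elim d' d
      rw [hcnt x ht, Function.update_self, ih hs]
      have := List.length_pos_iff.2 hne
      simp
      omega

theorem sat_trans (r : C.Run fun _ => u) {t : List ℕ} (ht : t ∈ r.tree) (hne : t ≠ []) :
    PosBool.Sat {q | ∃ m, t ++ [m] ∈ r.tree ∧ r.label (t ++ [m]) = q}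
      (C.trans (r.label t) (u (t.length - 1)) 0) := by
  obtain ⟨d, -, hsat⟩ := r.step t ht hne
  rwa [Subsingleton.elim d 0, r.cnt_eq_length_sub_one ht] at hsat

/-- A tree each of whose nodes `t` behaves like the node `map t` of `r`, on the word `u'`. -/
structure Simulation (r : C.Run fun _ => u) (u' : ℕ → Γ) where
  tree : Set (List ℕ)
  map : List ℕ → List ℕ
  root_mem : [] ∈ tree
  prefix_closed : ∀ t m, t ++ [m] ∈ tree → t ∈ tree
  map_nil : map [] = []
  map_mem : ∀ t ∈ tree, map t ∈ r.tree
  map_ne_nil : ∀ t ∈ tree, t ≠ [] → map t ≠ []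
  append_mem_iff : ∀ t ∈ tree, ∀ m, t ++ [m] ∈ tree ↔ map t ++ [m] ∈ r.tree
  label_map_append : ∀ t ∈ tree, ∀ m, t ++ [m] ∈ tree →
    r.label (map (t ++ [m])) = r.label (map t ++ [m])
  letter_eq : ∀ t ∈ tree, t ≠ [] → u' (t.length - 1) = u ((map t).length - 1)

namespace Simulation

variable {r : C.Run fun _ => u} {u' : ℕ → Γ} (S : r.Simulation u')

theorem childLabels_eq {t : List ℕ} (ht : t ∈ S.tree) :
    {q | ∃ m, t ++ [m] ∈ S.tree ∧ r.label (S.map (t ++ [m])) = q} =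
      {q | ∃ m, S.map t ++ [m] ∈ r.tree ∧ r.label (S.map t ++ [m]) = q} := by
  ext q
  refine exists_congr fun m => ⟨fun ⟨hm, hq⟩ => ?_, fun ⟨hm, hq⟩ => ?_⟩
  · exact ⟨(S.append_mem_iff t ht m).1 hm, S.label_map_append t ht m hm ▸ hq⟩
  · have hm' := (S.append_mem_iff t ht m).2 hm
    exact ⟨hm', S.label_map_append t ht m hm' ▸ hq⟩

def run : C.Run fun _ => u' where
  tree := S.tree
  label t := r.label (S.map t)
  cnt t _ := t.length - 1
  root_mem := S.root_mem
  prefix_closed := S.prefix_closed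
  has_child t ht := by
    obtain ⟨m, hm⟩ := r.has_child _ (S.map_mem t ht)
    exact ⟨m, (S.append_mem_iff t ht m).2 hm⟩
  cnt_init t _ ht := by
    funext
    simp only [Pi.zero_apply]
    omega
  init_sat := by
    have h := S.childLabels_eq S.root_mem
    simp only [List.nil_append, S.map_nil] at h
    rw [h]
    exact r.init_sat
  step t ht hne := by
    refine ⟨0, fun m _ => ?_, ?_⟩
    · funext d
      have := List.length_pos_iff.2 hne
      rw [Subsingleton.elim d 0, Function.update_self]
      simp only [List.length_append, List.length_singleton]
      omega
    · rw [S.childLabels_eq ht, S.letter_eq t ht hne]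
      exact r.sat_trans (S.map_mem t ht) (S.map_ne_nil t ht hne)

theorem run_accepting (hr : r.Accepting)
    (hpath : ∀ p, S.run.IsPath p → ∃ P a b, r.IsPath P ∧ ∀ i, S.map (p (i + a)) = P (i + b)) :
    S.run.Accepting := by
  intro p hp
  obtain ⟨P, a, b, hP, hpP⟩ := hpath p hp
  have h : (infOften fun i => C.prio (S.run.label (p i))) =
      infOften fun i => C.prio (r.label (P i)) := by
    rw [← infOften_comp_add _ a, ← infOften_comp_add (fun i => C.prio (r.label (P i))) b]
    simp only [run, hpP]
  show Even (sInf (infOften _))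
  rw [h]
  exact hr P hP

end Simulation

section Graft

variable (i : ℕ) (v : List ℕ → List ℕ)

def graftMap (t : List ℕ) : List ℕ :=
  if t.length ≤ i then t else v (t.take (i + 1)) ++ t.drop (i + 1)

variable {i v}

theorem graftMap_of_length_le {t : List ℕ} (h : t.length ≤ i) : graftMap i v t = t := if_pos h

theorem graftMap_of_length_eq {t : List ℕ} (h : t.length = i + 1) : graftMap i v t = v t := by
  rw [graftMap, if_neg (by omega), List.take_of_length_le h.le, List.drop_eq_nil_of_le h.le,
    List.append_nil]

theorem graftMap_append {t : List ℕ} (h : i < t.length) (m : ℕ) :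
    graftMap i v (t ++ [m]) = graftMap i v t ++ [m] := by
  rw [graftMap, graftMap, if_neg (by simp; omega), if_neg (by omega),
    List.take_append_of_le_length h, List.drop_append_of_le_length h, List.append_assoc]

variable {j : ℕ} (r : C.Run fun _ => u)
  (hv : ∀ s ∈ r.tree, s.length = i + 1 → v s ∈ r.tree ∧ (v s).length = j + 1 ∧
    r.label (v s) = r.label s)
include hv

theorem graftMap_mem_of_length_le {t : List ℕ} (ht : t ∈ r.tree) (h : t.length ≤ i + 1) :
    graftMap i v t ∈ r.tree ∧ r.label (graftMap i v t) = r.label t := by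
  rcases h.lt_or_eq with h | h
  · rw [graftMap_of_length_le (by omega)]
    exact ⟨ht, rfl⟩
  · rw [graftMap_of_length_eq h]
    exact ⟨(hv t ht h).1, (hv t ht h).2.2⟩

theorem length_graftMap (hij : i ≤ j) {t : List ℕ} (ht : t.take (i + 1) ∈ r.tree)
    (h : i < t.length) : (graftMap i v t).length = t.length + (j - i) := by
  rw [graftMap, if_neg (by omega), List.length_append,
    (hv _ ht (by simp; omega)).2.1, List.length_drop]
  omega

def graft (hij : i ≤ j) : r.Simulation (eraseIco u i j) where
  tree := {t | t.take (i + 1) ∈ r.tree ∧ graftMap i v t ∈ r.tree}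
  map := graftMap i v
  root_mem := ⟨by simpa using r.root_mem, by simpa [graftMap_of_length_le] using r.root_mem⟩
  prefix_closed t m := by
    simp only [Set.mem_ofPred_eq]
    rintro ⟨h1, h2⟩
    rcases le_or_gt t.length i with h | h
    · rw [List.take_of_length_le (by simp; omega)] at h1
      have ht := r.prefix_closed t m h1
      rw [List.take_of_length_le (by omega), graftMap_of_length_le h]
      exact ⟨ht, ht⟩
    · rw [List.take_append_of_le_length h, graftMap_append h] at *
      exact ⟨h1, r.prefix_closed _ m h2⟩
  map_nil := graftMap_of_length_le (Nat.zero_le _)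
  map_mem _ ht := ht.2
  map_ne_nil t ht hne := by
    rcases le_or_gt t.length i with h | h
    · rwa [graftMap_of_length_le h]
    · rw [← List.length_pos_iff, length_graftMap r hv hij ht.1 h]
      omega
  append_mem_iff t ht m := by
    simp only [Set.mem_ofPred_eq]
    rcases le_or_gt t.length i with h | h
    · rw [List.take_of_length_le (by simp; omega), graftMap_of_length_le h]
      exact ⟨fun h' => h'.1, fun h' => ⟨h', (graftMap_mem_of_length_le r hv h' (by simp; omega)).1⟩⟩
    · rw [List.take_append_of_le_length h, graftMap_append h]
      exact and_iff_right ht.1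
  label_map_append t ht m htm := by
    rcases le_or_gt t.length i with h | h
    · have htm' : t ++ [m] ∈ r.tree := by
        simpa [List.take_of_length_le (by simp; omega : (t ++ [m]).length ≤ i + 1)] using htm.1
      rw [graftMap_of_length_le h]
      exact (graftMap_mem_of_length_le r hv htm' (by simp; omega)).2
    · rw [graftMap_append h]
  letter_eq t ht hne := by
    have := List.length_pos_iff.2 hne
    rcases le_or_gt t.length i with h | h
    · rw [graftMap_of_length_le h, eraseIco, if_pos (by omega)]
    · rw [length_graftMap r hv hij ht.1 h, eraseIco, if_neg (by omega)]
      congr 1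
      omega

theorem exists_isPath_graftMap (hij : i ≤ j) {p : ℕ → List ℕ}
    (hp : (r.graft hv hij).run.IsPath p) :
    ∃ P, r.IsPath P ∧ ∀ k, graftMap i v (p (k + (i + 1))) = P (k + (j + 1)) := by
  have hmem : ∀ k, p (k + (i + 1)) ∈ (r.graft hv hij).tree := fun k => (hp.2 (k + i)).2
  refine r.exists_isPath_of_chain (fun k => (hmem k).2) (fun k => ?_) (fun k => ?_)
  · obtain ⟨m, hm⟩ := (hp.2 (k + (i + 1))).1
    refine ⟨m, ?_⟩
    rw [Nat.add_right_comm, hm, graftMap_append (by rw [hp.length_eq]; omega)]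
  · rw [length_graftMap r hv hij (hmem k).1 (by rw [hp.length_eq]; omega), hp.length_eq]
    omega

end Graft

theorem eraseIco_mem_lang1 (r : C.Run fun _ => u) (hr : r.Accepting) {i j : ℕ} (hij : i ≤ j)
    (hlabels : r.levelLabels (i + 1) ⊆ r.levelLabels (j + 1)) : eraseIco u i j ∈ lang1 C := by
  have hsel : ∀ s ∈ r.tree, s.length = i + 1 → ∃ t, t ∈ r.tree ∧ t.length = j + 1 ∧
      r.label t = r.label s := fun s hs hlen => by
    obtain ⟨t, ⟨ht, htlen⟩, hlab⟩ := hlabels ⟨s, ⟨hs, hlen⟩, rfl⟩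
    exact ⟨t, ht, htlen, hlab⟩
  choose! v hv using hsel
  refine ⟨(r.graft hv hij).run, (r.graft hv hij).run_accepting hr fun p hp => ?_⟩
  obtain ⟨P, hP, hpP⟩ := r.exists_isPath_graftMap hv hij hp
  exact ⟨P, i + 1, j + 1, hP, hpP⟩

end AAPA.Run

theorem not_exists_apa_encTuple_abLang :
    ¬ ∃ (Q : Type) (_ : Fintype Q) (_ : Nonempty Q) (C : AAPA (Fin 3 → AB) Q 1),
        lang1 C = encTuple '' abLang := by
  rintro ⟨Q, _, _, C, hC⟩
  classical
  set n := Fintype.card (Set Q) + 1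
  let w : Fin 3 → ℕ → AB := fun d => abWord ((d + 1 : ℕ) * n)
  obtain ⟨r, hr⟩ : encTuple w ∈ lang1 C := hC ▸ ⟨w, mem_abLang_iff.2 ⟨n, fun _ => rfl⟩, rfl⟩
  obtain ⟨i, j, hij, hjn, hlabels⟩ :
      ∃ i j, i < j ∧ j < n ∧ r.levelLabels (i + 1) ⊆ r.levelLabels (j + 1) := by
    obtain ⟨a, b, hab, heq⟩ := Fintype.exists_ne_map_eq_of_card_lt
      (fun k : Fin n => r.levelLabels (k + 1)) (by simp [n])
    rcases (Fin.val_injective.ne hab).lt_or_gt with h | h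
    exacts [⟨a, b, h, b.2, heq.le⟩, ⟨b, a, h, a.2, heq.ge⟩]
  obtain ⟨w', hw', henc⟩ := hC ▸ r.eraseIco_mem_lang1 hr hij.le hlabels
  have hw'd : ∀ d, w' d = abWord ((d + 1 : ℕ) * n - (j - i)) := fun d => by
    rw [← eraseIco_abWord hij.le (by nlinarith)]
    funext k
    have := congrFun (congrFun henc k) d
    simp only [encTuple, eraseIco, ite_apply] at this ⊢
    exact this
  obtain ⟨m, hm⟩ := mem_abLang_iff.1 hw'
  have h0 := abWord_injective ((hw'd 0).symm.trans (hm 0))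
  have h1 := abWord_injective ((hw'd 1).symm.trans (hm 1))
  simp only [Fin.val_zero, Fin.val_one] at h0 h1
  omega

/-- The language `L = {(aⁿ·b^ω, a²ⁿ·b^ω, a³ⁿ·b^ω) : n ∈ ℕ}` is
recognized by a NAPA over `{a,b}` with three directions, but no APA over the
alphabet `{a,b}³` accepts exactly the encodings of the tuples in `L`. -/
theorem napa_beyond_omega_regular :
    (∃ (Q : Type) (_ : Fintype Q) (_ : Nonempty Q) (B : AAPA AB Q 3),
        B.IsNondet ∧ B.lang = abLang) ∧
    ¬ ∃ (Q : Type) (_ : Fintype Q) (_ : Nonempty Q) (C : AAPA (Fin 3 → AB) Q 1),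
        lang1 C = encTuple '' abLang :=
  ⟨⟨_, inferInstance, ⟨(0, .a)⟩, ABNapa.automaton, ABNapa.automaton_isNondet,
    ABNapa.lang_automaton⟩, not_exists_apa_encTuple_abLang⟩
end

section
/- The k-semantics of H_μ is monotone in k: for every quantifier-free H_μ formula ψ in positive normal form, every predicate valuation V, all k ≤ k' in ℕ ∪ {∞} and every path assignment Π, ⟦ψ⟧_k^V(Π) ⊆ ⟦ψ⟧_{k'}^V(Π). -/
/-! ### Kripke structures and paths -/

/-- A Kripke structure over atomic propositions `AP` with states `S`:
an initial state, a total transition relation and a labeling function. -/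
structure Kripke (AP S : Type) where
  s0 : S
  delta : S → S → Prop
  lab : S → Set AP
  total : ∀ s, ∃ s', delta s s'

/-- The set of paths of a Kripke structure, starting in the initial state. -/
def Kripke.Path {AP S : Type} (K : Kripke AP S) : Type :=
  {p : ℕ → S // p 0 = K.s0 ∧ ∀ i : ℕ, K.delta (p i) (p (i + 1))}

/-- A path assignment: an assignment of paths of `K` to the path variables
`π₁, …, πₙ`. -/
abbrev PAssign {AP S : Type} (K : Kripke AP S) (n : ℕ) : Type :=
  Fin n → K.Path

/-! ### Syntax of quantifier-free `H_μ` -/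

/-- Quantifier-free `H_μ` formulas over atomic propositions `AP`, path variables
`π₁, …, πₙ` and predicates `χ`:
`ψ ::= a_π | ¬ψ | X | ○_π ψ | ψ ∨ ψ | μX.ψ`. -/
inductive HmuQF (AP : Type) (n : ℕ) (χ : Type) : Type
  | atom : AP → Fin n → HmuQF AP n χ
  | neg : HmuQF AP n χ → HmuQF AP n χ
  | pred : χ → HmuQF AP n χ
  | next : Fin n → HmuQF AP n χ → HmuQF AP n χ
  | or : HmuQF AP n χ → HmuQF AP n χ → HmuQF AP n χ
  | mu : χ → HmuQF AP n χ → HmuQF AP n χ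
  deriving DecidableEq

namespace HmuQF

variable {AP : Type} {n : ℕ} {χ : Type}

/-- Negations occur only directly in front of atomic propositions. -/
def NegNormal : HmuQF AP n χ → Prop
  | .atom _ _ => True
  | .neg ψ => ∃ a i, ψ = .atom a i
  | .pred _ => True
  | .next _ ψ => NegNormal ψ
  | .or ψ ψ' => NegNormal ψ ∧ NegNormal ψ'
  | .mu _ ψ => NegNormal ψ

/-- The list of predicates bound by fixpoint operators. -/
def binders : HmuQF AP n χ → List χ
  | .atom _ _ => []
  | .neg ψ => binders ψ
  | .pred _ => []
  | .next _ ψ => binders ψ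
  | .or ψ ψ' => binders ψ ++ binders ψ'
  | .mu X ψ => X :: binders ψ

/-- Positive normal form: `¬` occurs only directly in front of atomic
propositions, and all bound predicates are distinct. -/
def PNF (ψ : HmuQF AP n χ) : Prop :=
  ψ.NegNormal ∧ ψ.binders.Nodup

/-- The free predicates of a formula. -/
def freePreds : HmuQF AP n χ → Set χ
  | .atom _ _ => ∅
  | .neg ψ => freePreds ψ
  | .pred X => {X}
  | .next _ ψ => freePreds ψ
  | .or ψ ψ' => freePreds ψ ∪ freePreds ψ'
  | .mu X ψ => freePreds ψ \ {X}

/-- The path variables occurring in a formula. -/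
def pathVars : HmuQF AP n χ → Set (Fin n)
  | .atom _ i => {i}
  | .neg ψ => pathVars ψ
  | .pred _ => ∅
  | .next i ψ => insert i (pathVars ψ)
  | .or ψ ψ' => pathVars ψ ∪ pathVars ψ'
  | .mu _ ψ => pathVars ψ

end HmuQF

/-! ### Semantics of quantifier-free `H_μ` -/

/-- `Gset n k` is `G_kⁿ`: the index tuples in which any two components differ by at
most `k ∈ ℕ ∪ {∞}`. -/
def Gset (n : ℕ) (k : ℕ∞) : Set (Fin n → ℕ) :=
  {j | ∀ i i' : Fin n, ((j i - j i' : ℕ) : ℕ∞) ≤ k}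

/-- The `k`-semantics `⟦ψ⟧_k^V : PA → 2^(G_kⁿ)` of a quantifier-free `H_μ`
formula, relative to a Kripke structure `K` and a predicate valuation `V`. -/
def Hsem {AP S χ : Type} [DecidableEq χ] (K : Kripke AP S) {n : ℕ} (k : ℕ∞) :
    HmuQF AP n χ → (χ → PAssign K n → Set (Fin n → ℕ)) →
      PAssign K n → Set (Fin n → ℕ)
  | .atom a i, _, Pa => {j ∈ Gset n k | a ∈ K.lab ((Pa i).1 (j i))}
  | .neg ψ, V, Pa => Gset n k \ Hsem K k ψ V Pa
  | .pred X, V, Pa => V X Pa ∩ Gset n k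
  | .next i ψ, V, Pa =>
      {j ∈ Gset n k | Function.update j i (j i + 1) ∈ Hsem K k ψ V Pa}
  | .or ψ ψ', V, Pa => Hsem K k ψ V Pa ∪ Hsem K k ψ' V Pa
  | .mu X ψ, V, Pa =>
      {j | ∀ ξ : PAssign K n → Set (Fin n → ℕ),
        (∀ Pa', ξ Pa' ⊆ Gset n k) →
        (∀ Pa', Hsem K k ψ (Function.update V X ξ) Pa' ⊆ ξ Pa') → j ∈ ξ Pa}

lemma Gset_mono {n : ℕ} {k k' : ℕ∞} (h : k ≤ k') : Gset n k ⊆ Gset n k' :=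
  fun _ hj i i' => (hj i i').trans h

lemma hsem_subset_Gset {AP S χ : Type} [DecidableEq χ] (K : Kripke AP S) {n : ℕ}
    (k : ℕ∞) (ψ : HmuQF AP n χ) (V : χ → PAssign K n → Set (Fin n → ℕ))
    (Pa : PAssign K n) : Hsem K k ψ V Pa ⊆ Gset n k := by
  induction ψ generalizing V Pa with
  | atom a i => exact fun j hj => hj.1
  | neg ψ ih => exact fun j hj => hj.1
  | pred X => exact fun j hj => hj.2
  | next i ψ ih => exact fun j hj => hj.1
  | or ψ ψ' ih ih' => exact fun j hj => hj.elim (fun h => ih V Pa h) (fun h => ih' V Pa h)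
  | mu X ψ ih =>
      exact fun j hj => hj (fun _ => Gset n k) (fun _ => subset_rfl) (fun Pa' => ih _ Pa')

lemma hsem_mono_V {AP S χ : Type} [DecidableEq χ] (K : Kripke AP S) {n : ℕ}
    (k : ℕ∞) (ψ : HmuQF AP n χ) (hψ : ψ.NegNormal)
    (V V' : χ → PAssign K n → Set (Fin n → ℕ))
    (hV : ∀ X Pa, V X Pa ⊆ V' X Pa)
    (Pa : PAssign K n) : Hsem K k ψ V Pa ⊆ Hsem K k ψ V' Pa := by
  induction ψ generalizing V V' Pa with
  | atom a i => exact subset_rfl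
  | neg ψ ih =>
      obtain ⟨a, i, rfl⟩ := hψ
      exact subset_rfl
  | pred X => exact fun j hj => ⟨hV X Pa hj.1, hj.2⟩
  | next i ψ ih => exact fun j hj => ⟨hj.1, ih hψ V V' hV Pa hj.2⟩
  | or ψ ψ' ih ih' =>
      exact fun j hj => hj.elim (fun h => Or.inl (ih hψ.1 V V' hV Pa h))
        (fun h => Or.inr (ih' hψ.2 V V' hV Pa h))
  | mu X ψ ih =>
      intro j hj ξ hb hpre
      refine hj ξ hb (fun Pa' => ?_)
      refine (ih hψ (Function.update V X ξ) (Function.update V' X ξ) ?_ Pa').trans (hpre Pa')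
      intro Y Pa''
      by_cases h : Y = X
      · subst h; simp
      · simp [Function.update_of_ne h]; exact hV Y Pa''

/-- The `k`-semantics of `H_μ` is monotone in `k`: for every
quantifier-free `H_μ` formula `ψ` in positive normal form, every predicate
valuation `V`, all `k ≤ k'` in `ℕ ∪ {∞}` and every path assignment,
`⟦ψ⟧_k^V(Π) ⊆ ⟦ψ⟧_{k'}^V(Π)`. -/
theorem hmu_semantics_monotone_in_k
    (AP S χ : Type) [Fintype AP] [Fintype S] [DecidableEq χ]
    (K : Kripke AP S) (n : ℕ)
    (ψ : HmuQF AP n χ) (hψ : ψ.PNF)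
    (V : χ → PAssign K n → Set (Fin n → ℕ))
    (k k' : ℕ∞) (hkk' : k ≤ k') (Pa : PAssign K n) :
    Hsem K k ψ V Pa ⊆ Hsem K k' ψ V Pa := by
  obtain ⟨hnn, -⟩ := hψ
  induction ψ generalizing V Pa with
  | atom a i => exact fun j hj => ⟨Gset_mono hkk' hj.1, hj.2⟩
  | neg ψ ih =>
      obtain ⟨a, i, rfl⟩ := hnn
      rintro j ⟨h1, h2⟩
      exact ⟨Gset_mono hkk' h1, fun hc => h2 ⟨h1, hc.2⟩⟩
  | pred X => exact fun j hj => ⟨hj.1, Gset_mono hkk' hj.2⟩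
  | next i ψ ih => exact fun j hj => ⟨Gset_mono hkk' hj.1, ih V Pa hnn hj.2⟩
  | or ψ ψ' ih ih' =>
      exact fun j hj => hj.elim (fun h => Or.inl (ih V Pa hnn.1 h))
        (fun h => Or.inr (ih' V Pa hnn.2 h))
  | mu X ψ ih =>
      intro j hj ξ' hb' hpre'
      have key := hj (fun Pa' => ξ' Pa' ∩ Gset n k)
        (fun Pa' => Set.inter_subset_right)
        (fun Pa' => ?_)
      · exact key.1
      · refine Set.subset_inter ?_ (hsem_subset_Gset K k ψ _ Pa')
        refine (hsem_mono_V K k ψ hnn _ _ ?_ Pa').trans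
          ((ih (Function.update V X ξ') Pa' hnn).trans (hpre' Pa'))
        intro Y Pa''
        by_cases h : Y = X
        · subst h; simp
        · simp [Function.update_of_ne h]
end

section
/- For every Kripke structure K, every closed quantified H_μ formula φ in positive normal form, and all k ≤ k' in ℕ ∪ {∞}: K ⊨_k φ implies K ⊨_{k'} φ. -/
/-! ### Quantified `H_μ` formulas -/

/-- Quantified `H_μ` formulas: `φ ::= ∃π.φ | ∀π.φ | ψ` with `ψ` quantifier-free. -/
inductive Hmu (AP : Type) (n : ℕ) (χ : Type) : Type
  | qf : HmuQF AP n χ → Hmu AP n χ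
  | ex : Fin n → Hmu AP n χ → Hmu AP n χ
  | all : Fin n → Hmu AP n χ → Hmu AP n χ

namespace Hmu

variable {AP : Type} {n : ℕ} {χ : Type}

/-- The quantifier-free body of a quantified formula. -/
def body : Hmu AP n χ → HmuQF AP n χ
  | .qf ψ => ψ
  | .ex _ φ => body φ
  | .all _ φ => body φ

/-- The list of quantified path variables. -/
def qvars : Hmu AP n χ → List (Fin n)
  | .qf _ => []
  | .ex i φ => i :: qvars φ
  | .all i φ => i :: qvars φ

/-- Positive normal form for quantified formulas: the body is in positive normal
form and all bound path variables are distinct. -/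
def PNF (φ : Hmu AP n χ) : Prop :=
  φ.body.PNF ∧ φ.qvars.Nodup

/-- Closedness, relative to the set `B` of path variables bound so far: all path
variables of the body are bound and all predicates of the body are bound. -/
def ClosedAux : Set (Fin n) → Hmu AP n χ → Prop
  | B, .qf ψ => ψ.pathVars ⊆ B ∧ ψ.freePreds = ∅
  | B, .ex i φ => ClosedAux (insert i B) φ
  | B, .all i φ => ClosedAux (insert i B) φ

/-- A quantified formula is closed if all its path variables and predicates are
bound. -/
def Closed (φ : Hmu AP n χ) : Prop := ClosedAux ∅ φ

end Hmu

/-- The quantifier semantics `Π ⊨_k^K φ` of quantified `H_μ` formulas. -/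
def HmuSat {AP S χ : Type} [DecidableEq χ] (K : Kripke AP S) {n : ℕ} (k : ℕ∞) :
    PAssign K n → Hmu AP n χ → Prop
  | Pa, .qf ψ => ∃ V : χ → PAssign K n → Set (Fin n → ℕ),
      (fun _ => 0) ∈ Hsem K k ψ V Pa
  | Pa, .ex i φ => ∃ p : K.Path, HmuSat K k (Function.update Pa i p) φ
  | Pa, .all i φ => ∀ p : K.Path, HmuSat K k (Function.update Pa i p) φ

/-- `K ⊨_k φ`: satisfaction of a closed quantified formula by a Kripke structure
(for closed formulas the initial path assignment is irrelevant). -/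
def KripkeSat {AP S χ : Type} [DecidableEq χ] (K : Kripke AP S) {n : ℕ} (k : ℕ∞)
    (φ : Hmu AP n χ) : Prop :=
  ∀ Pa : PAssign K n, HmuSat K k Pa φ


lemma Hsem_subset_Gset {AP S χ : Type} [DecidableEq χ] (K : Kripke AP S) {n : ℕ}
    (k : ℕ∞) (ψ : HmuQF AP n χ) :
    ∀ V Pa, Hsem K k ψ V Pa ⊆ Gset n k := by
  induction ψ with
  | atom a i => intro V Pa j hj; exact hj.1
  | neg ψ ih => intro V Pa j hj; exact hj.1
  | pred X => intro V Pa j hj; exact hj.2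
  | next i ψ ih => intro V Pa j hj; exact hj.1
  | or ψ ψ' ih ih' =>
      intro V Pa j hj
      rcases hj with h | h
      · exact ih _ _ h
      · exact ih' _ _ h
  | mu X ψ ih =>
      intro V Pa j hj
      exact hj (fun _ => Gset n k) (fun _ => subset_rfl) (fun Pa' => ih _ _)

lemma Hsem_mono {AP S χ : Type} [DecidableEq χ] (K : Kripke AP S) {n : ℕ}
    {k k' : ℕ∞} (hkk' : k ≤ k') (ψ : HmuQF AP n χ) (hn : ψ.NegNormal)
    (V V' : χ → PAssign K n → Set (Fin n → ℕ))
    (hV : ∀ X Pa, V X Pa ∩ Gset n k ⊆ V' X Pa) (Pa : PAssign K n) :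
    Hsem K k ψ V Pa ⊆ Hsem K k' ψ V' Pa := by
  induction ψ generalizing V V' Pa with
  | atom a i => exact fun j hj => ⟨Gset_mono hkk' hj.1, hj.2⟩
  | neg ψ ih =>
      obtain ⟨a, i, rfl⟩ := hn
      intro j hj
      refine ⟨Gset_mono hkk' hj.1, fun hc => hj.2 ⟨hj.1, hc.2⟩⟩
  | pred X => exact fun j hj => ⟨hV X Pa ⟨hj.1, hj.2⟩, Gset_mono hkk' hj.2⟩
  | next i ψ ih =>
      exact fun j hj => ⟨Gset_mono hkk' hj.1, ih hn V V' hV Pa hj.2⟩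
  | or ψ ψ' ih ih' =>
      rintro j (hj | hj)
      · exact Or.inl (ih hn.1 V V' hV Pa hj)
      · exact Or.inr (ih' hn.2 V V' hV Pa hj)
  | mu X ψ ih =>
      intro j hj ξ' hξG hξpre
      have hmain := hj (fun Pb => ξ' Pb ∩ Gset n k)
        (fun _ => Set.inter_subset_right) ?_
      · exact hmain.1
      · intro Pa' j' hj'
        have hsub : Hsem K k ψ (Function.update V X (fun Pb => ξ' Pb ∩ Gset n k)) Pa'
            ⊆ Hsem K k' ψ (Function.update V' X ξ') Pa' := by
          refine ih hn _ _ ?_ Pa'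
          intro Y Pb
          by_cases hYX : Y = X
          · subst hYX
            simp only [Function.update_self]
            exact fun z hz => hz.1.1
          · simp only [Function.update_of_ne hYX]
            exact hV Y Pb
        exact ⟨hξpre Pa' (hsub hj'), Hsem_subset_Gset K k ψ _ Pa' hj'⟩

lemma HmuSat_mono {AP S χ : Type} [DecidableEq χ] (K : Kripke AP S) {n : ℕ}
    {k k' : ℕ∞} (hkk' : k ≤ k') (φ : Hmu AP n χ) (hn : φ.body.NegNormal) :
    ∀ Pa : PAssign K n, HmuSat K k Pa φ → HmuSat K k' Pa φ := by
  induction φ with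
  | qf ψ =>
      rintro Pa ⟨V, h0⟩
      exact ⟨V, Hsem_mono K hkk' ψ hn V V
        (fun X Pb => Set.inter_subset_left) Pa h0⟩
  | ex i φ ih =>
      rintro Pa ⟨p, hp⟩
      exact ⟨p, ih hn _ hp⟩
  | all i φ ih =>
      intro Pa hp p
      exact ih hn _ (hp p)

/-- For every Kripke structure `K`, every closed quantified
`H_μ` formula `φ` in positive normal form, and all `k ≤ k'` in `ℕ ∪ {∞}`:
`K ⊨_k φ` implies `K ⊨_{k'} φ`. -/
theorem hmu_kripke_satisfaction_monotone_in_k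
    (AP S χ : Type) [Fintype AP] [Fintype S] [DecidableEq χ]
    (K : Kripke AP S) (n : ℕ)
    (φ : Hmu AP n χ) (hclosed : φ.Closed) (hpnf : φ.PNF)
    (k k' : ℕ∞) (hkk' : k ≤ k') :
    KripkeSat K k φ → KripkeSat K k' φ := by
  intro h Pa
  exact HmuSat_mono K hkk' φ hpnf.1.1 Pa (h Pa)
end

section
/- The semantics of H_μ preserves well-formedness: for every quantifier-free H_μ formula ψ and every well-formed predicate valuation V, the function ⟦ψ⟧^V is well-formed, i.e., for all vectors v, v' ∈ ℕⁿ and path assignments Π, Π' with Π[v] = Π'[v']: v ∈ ⟦ψ⟧^V(Π) if and only if v' ∈ ⟦ψ⟧^V(Π'). -/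
/-- The tuple of `ω`-words over `S` induced by the path assignment `Pa`, shifted
componentwise by `v`; it represents the shifted path assignment `Π[v]`. -/
def wshift {AP S : Type} {K : Kripke AP S} {n : ℕ}
    (Pa : PAssign K n) (v : Fin n → ℕ) : Fin n → ℕ → S :=
  fun i j => (Pa i).1 (j + v i)

/-- A function `ξ : PA → 2^(ℕⁿ)` is well-formed if `Π[v] = Π'[v']` implies
`v ∈ ξ(Π) ↔ v' ∈ ξ(Π')`. -/
def WellFormedFun {AP S : Type} {K : Kripke AP S} {n : ℕ}
    (ξ : PAssign K n → Set (Fin n → ℕ)) : Prop :=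
  ∀ (v v' : Fin n → ℕ) (Pa Pa' : PAssign K n),
    wshift Pa v = wshift Pa' v' → (v ∈ ξ Pa ↔ v' ∈ ξ Pa')

/-- A predicate valuation is well-formed if each of its components is. -/
def WellFormedV {AP S χ : Type} {K : Kripke AP S} {n : ℕ}
    (V : χ → PAssign K n → Set (Fin n → ℕ)) : Prop :=
  ∀ X : χ, WellFormedFun (V X)


/-! ### Auxiliary lemmas for the proof -/

private lemma mem_Gset_top {n : ℕ} (j : Fin n → ℕ) : j ∈ Gset n ⊤ :=
  fun _ _ => le_top

private lemma wshift_add {AP S : Type} {K : Kripke AP S} {n : ℕ}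
    {Pa Pa' : PAssign K n} {v v' : Fin n → ℕ}
    (h : wshift Pa v = wshift Pa' v') (d : Fin n → ℕ) :
    wshift Pa (v + d) = wshift Pa' (v' + d) := by
  funext i j
  have h1 := congrFun (congrFun h i) (j + d i)
  simp only [wshift] at h1 ⊢
  have e1 : j + (v + d) i = j + d i + v i := by simp only [Pi.add_apply]; omega
  have e2 : j + (v' + d) i = j + d i + v' i := by simp only [Pi.add_apply]; omega
  rw [e1, e2, h1]

private lemma add_sub_cancel_fun {n : ℕ} (v e : Fin n → ℕ) : (v + e) - v = e := by
  funext i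
  simp only [Pi.sub_apply, Pi.add_apply]
  omega

private lemma le_add_fun {n : ℕ} (v e : Fin n → ℕ) : v ≤ v + e :=
  fun i => Nat.le_add_right (v i) (e i)

private lemma sub_add_restore {n : ℕ} {v w : Fin n → ℕ} (h : v ≤ w) :
    v + (w - v) = w := by
  funext i
  have h2 : v i ≤ w i := h i
  simp only [Pi.add_apply, Pi.sub_apply]
  omega

/-- The key transfer lemma: semantics agree along the "ray" generated by a pair of
shift-equivalent configurations, for any pair of valuations agreeing along that ray. -/
private lemma hsem_key {AP S χ : Type} [DecidableEq χ] {K : Kripke AP S} {n : ℕ}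
    {Pa Pa' : PAssign K n} {v v' : Fin n → ℕ}
    (h : wshift Pa v = wshift Pa' v') :
    ∀ (ψ : HmuQF AP n χ) (W W' : χ → PAssign K n → Set (Fin n → ℕ)),
      (∀ Z e, (v + e) ∈ W Z Pa ↔ (v' + e) ∈ W' Z Pa') →
      ∀ d, ((v + d) ∈ Hsem K ⊤ ψ W Pa ↔ (v' + d) ∈ Hsem K ⊤ ψ W' Pa') := by
  intro ψ
  induction ψ with
  | atom a i =>
      intro W W' _ d
      have h1 := congrFun (congrFun h i) (d i)
      simp only [wshift] at h1
      have e1 : (v + d) i = d i + v i := by simp only [Pi.add_apply]; omega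
      have e2 : (v' + d) i = d i + v' i := by simp only [Pi.add_apply]; omega
      simp [Hsem, Set.mem_setOf_eq, mem_Gset_top, e1, e2, h1]
  | neg ψ ih =>
      intro W W' hWW d
      simp [Hsem, Set.mem_diff, mem_Gset_top, ih W W' hWW d]
  | pred X =>
      intro W W' hWW d
      simp [Hsem, Set.mem_inter_iff, mem_Gset_top]
      exact hWW X d
  | next i ψ ih =>
      intro W W' hWW d
      have e1 : Function.update (v + d) i ((v + d) i + 1)
          = v + Function.update d i (d i + 1) := by
        funext j
        by_cases hj : j = i
        · subst hj; simp [Pi.add_apply]; omega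
        · simp [Function.update_of_ne hj, Pi.add_apply]
      have e2 : Function.update (v' + d) i ((v' + d) i + 1)
          = v' + Function.update d i (d i + 1) := by
        funext j
        by_cases hj : j = i
        · subst hj; simp [Pi.add_apply]; omega
        · simp [Function.update_of_ne hj, Pi.add_apply]
      simp only [Hsem, Set.mem_setOf_eq, mem_Gset_top, true_and, e1, e2]
      exact ih W W' hWW (Function.update d i (d i + 1))
  | or ψ ψ' ih ih' =>
      intro W W' hWW d
      simp [Hsem, Set.mem_union, ih W W' hWW d, ih' W W' hWW d]
  | mu X ψ ih =>
      intro W W' hWW d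
      simp only [Hsem, Set.mem_setOf_eq]
      constructor
      · intro hm ξ' hG' hpre'
        set ζ' : PAssign K n → Set (Fin n → ℕ) :=
          fun Pa₂ => {w | Pa₂ = Pa → v ≤ w → (v' + (w - v)) ∈ ξ' Pa'} with hζ'
        have hmatch : ∀ Z e,
            (v + e) ∈ Function.update W X ζ' Z Pa ↔
            (v' + e) ∈ Function.update W' X ξ' Z Pa' := by
          intro Z e
          by_cases hZ : Z = X
          · subst hZ
            simp only [Function.update_self, hζ', Set.mem_setOf_eq]
            constructor
            · intro H
              have := H (by trivial) (le_add_fun v e)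
              rwa [add_sub_cancel_fun] at this
            · intro H _ _
              rwa [add_sub_cancel_fun]
          · simp only [Function.update_of_ne hZ]
            exact hWW Z e
        have hpre : ∀ Pa₂, Hsem K ⊤ ψ (Function.update W X ζ') Pa₂ ⊆ ζ' Pa₂ := by
          intro Pa₂ w hw hPaeq hle
          subst hPaeq
          have hd : w = v + (w - v) := (sub_add_restore hle).symm
          rw [hd] at hw
          have := (ih (Function.update W X ζ') (Function.update W' X ξ') hmatch (w - v)).mp hw
          exact hpre' Pa' this
        have hin := hm ζ' (fun Pa₂ w _ => mem_Gset_top w) hpre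
        have := hin rfl (le_add_fun v d)
        rwa [add_sub_cancel_fun] at this
      · intro hm ζ hG hpre
        set ξ'' : PAssign K n → Set (Fin n → ℕ) :=
          fun Pa₂ => {w | Pa₂ = Pa' → v' ≤ w → (v + (w - v')) ∈ ζ Pa} with hξ''
        have hmatch : ∀ Z e,
            (v + e) ∈ Function.update W X ζ Z Pa ↔
            (v' + e) ∈ Function.update W' X ξ'' Z Pa' := by
          intro Z e
          by_cases hZ : Z = X
          · subst hZ
            simp only [Function.update_self, hξ'', Set.mem_setOf_eq]
            constructor
            · intro H _ _
              rwa [add_sub_cancel_fun]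
            · intro H
              have := H (by trivial) (le_add_fun v' e)
              rwa [add_sub_cancel_fun] at this
          · simp only [Function.update_of_ne hZ]
            exact hWW Z e
        have hpre'' : ∀ Pa₂, Hsem K ⊤ ψ (Function.update W' X ξ'') Pa₂ ⊆ ξ'' Pa₂ := by
          intro Pa₂ w hw hPaeq hle
          subst hPaeq
          have hd : w = v' + (w - v') := (sub_add_restore hle).symm
          rw [hd] at hw
          have := (ih (Function.update W X ζ) (Function.update W' X ξ'') hmatch (w - v')).mpr hw
          exact hpre Pa this
        have hin := hm ξ'' (fun Pa₂ w _ => mem_Gset_top w) hpre''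
        have := hin rfl (le_add_fun v' d)
        rwa [add_sub_cancel_fun] at this

/-- The semantics of `H_μ` preserves well-formedness: for every
quantifier-free `H_μ` formula `ψ` and well-formed predicate valuation `V`, the
function `⟦ψ⟧^V` (the `∞`-semantics) is well-formed. -/
theorem hmu_semantics_preserves_wellformedness
    (AP S χ : Type) [Fintype AP] [Fintype S] [DecidableEq χ]
    (K : Kripke AP S) (n : ℕ)
    (ψ : HmuQF AP n χ)
    (V : χ → PAssign K n → Set (Fin n → ℕ)) (hV : WellFormedV V) :
    WellFormedFun (Hsem K ⊤ ψ V) := by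
  intro v v' Pa Pa' hsh
  have hmatch : ∀ Z e, (v + e) ∈ V Z Pa ↔ (v' + e) ∈ V Z Pa' :=
    fun Z e => hV Z (v + e) (v' + e) Pa Pa' (wshift_add hsh e)
  have := hsem_key hsh ψ V V hmatch 0
  simpa using this
end
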